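/- arXiv:2407.18750 — 9 statements merged into one kernel-verified Lean document; each statement's English description precedes it below -/
import Mathlib

section
/- Let n be a positive integer, let A be an n×n row-stochastic real matrix such that some power of A has a strictly positive column, let D be an n×n column-stochastic real matrix, and let Q be the 2n×2n block lower-triangular matrix Q = [[A, 0], [I − A, D]]. Assume that ker((Q − I)²) = ker(Q − I) (as subspaces of ℝ^{2n}) and that every complex root μ ≠ 1 of the characteristic polynomial of Q satisfies |μ| < 1. Then there exist a real 2n×2n matrix P, a constant Γ > 0, and γ ∈ (0,1) such that |(Q^k)_{i,j} − P_{i,j}| ≤ Γ·γ^k for all k ≥ 1 and all indices i, j; moreover there is a vector π ∈ ℝ^n with π_l ≥ 0, Σ_l π_l = 1 and πᵀA = πᵀ such that P_{j,l} = π_l for all j, l ∈ {1,…,n}, and P_{j,l} = 0 for all j ∈ {1,…,n} and l ∈ {n+1,…,2n}. -/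
/-!
Semisimplicity of the eigenvalue `1` makes `ker (Q - 1)` and `range (Q - 1)` complementary. The
projection `P` onto the first along the second satisfies `P² = P` and `QP = PQ = P`, so
`(Q - P)^k = Q^k - P` for `k ≥ 1`, and every nonzero eigenvalue of `Q - P` is an eigenvalue of `Q`
other than `1`. Hence the spectral radius of `Q - P` is `< 1`, and Gelfand's formula bounds
`‖Q^k - P‖` geometrically.

Since `Q` is block lower triangular, the upper blocks of `Q^k` are `A^k` and `0`. So `A^k`
converges to a row-stochastic `B` with `B A = B` and `A^{k₀} B = B`. Each column of `B` is then
fixed by `A^{k₀}`, which has a positive column `j₀`, and a maximum principle makes it constant. So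
all rows of `B` equal the stationary distribution `π = B j₀`.
-/

open Filter Topology Matrix

theorem exists_norm_pow_le_geometric_of_spectralRadius_lt_one {A : Type*} [NormedRing A]
    [NormedAlgebra ℂ A] [CompleteSpace A] (a : A) (ha : spectralRadius ℂ a < 1) :
    ∃ Γ γ : ℝ, 0 < Γ ∧ 0 < γ ∧ γ < 1 ∧ ∀ k : ℕ, ‖a ^ k‖ ≤ Γ * γ ^ k := by
  obtain ⟨γ, hργ, hγ1⟩ := ENNReal.lt_iff_exists_nnreal_btwn.1 ha
  have hγ0 : 0 < γ := by exact_mod_cast zero_le.trans_lt hργ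
  have hpow : ∀ᶠ k : ℕ in atTop, ‖a ^ k‖ / γ ^ k ≤ 1 := by
    filter_upwards [(spectrum.gelfand_formula a).eventually_lt_const hργ,
      eventually_ge_atTop 1] with k hk hk1
    rw [one_div, ENNReal.rpow_inv_lt_iff (by positivity), ENNReal.rpow_natCast] at hk
    rw [div_le_one (by positivity)]
    exact_mod_cast hk.le
  obtain ⟨C, hC⟩ := (isBoundedUnder_of_eventually_le hpow).bddAbove_range
  refine ⟨max C 1, γ, by positivity, hγ0, by exact_mod_cast hγ1, fun k => ?_⟩
  have := (hC ⟨k, rfl⟩).trans (le_max_left C 1)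
  rwa [div_le_iff₀ (by positivity)] at this

theorem pow_mul_eq_of_tendsto_pow {M : Type*} [Monoid M] [TopologicalSpace M] [ContinuousMul M]
    [T2Space M] {a b : M} (h : Tendsto (a ^ ·) atTop (𝓝 b)) (m : ℕ) : a ^ m * b = b := by
  refine tendsto_nhds_unique (h.const_mul (a ^ m)) ?_
  simpa only [← pow_add, add_comm m] using (tendsto_add_atTop_iff_nat m).2 h

theorem mul_eq_of_tendsto_pow {M : Type*} [Monoid M] [TopologicalSpace M] [ContinuousMul M]
    [T2Space M] {a b : M} (h : Tendsto (a ^ ·) atTop (𝓝 b)) : b * a = b := by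
  refine tendsto_nhds_unique (h.mul_const a) ?_
  simpa only [← pow_succ] using (tendsto_add_atTop_iff_nat 1).2 h

theorem IsIdempotentElem.sub_pow_succ {R : Type*} [Ring R] {p q : R} (hp : IsIdempotentElem p)
    (hqp : q * p = p) (hpq : p * q = p) (k : ℕ) : (q - p) ^ (k + 1) = q ^ (k + 1) - p := by
  have hpowp : ∀ k : ℕ, q ^ k * p = p := fun k => by
    induction k with
    | zero => rw [pow_zero, one_mul]
    | succ k ih => rw [pow_succ, mul_assoc, hqp, ih]
  induction k with
  | zero => simp
  | succ k ih =>
    rw [pow_succ, ih, sub_mul, mul_sub, mul_sub, hpowp, hpq, hp.eq, ← pow_succ]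
    abel

namespace Module.End

variable {K V : Type*} [Field K] [AddCommGroup V] [Module K V] [FiniteDimensional K V]

theorem isCompl_ker_range_of_ker_sq_le {f : Module.End K V}
    (h : LinearMap.ker (f ^ 2) ≤ LinearMap.ker f) :
    IsCompl (LinearMap.ker f) (LinearMap.range f) := by
  refine (Submodule.isCompl_iff_disjoint _ _ ?_).2 ?_
  · rw [add_comm, f.finrank_range_add_finrank_ker]
  · rw [Submodule.disjoint_def]
    rintro _ hx ⟨z, rfl⟩
    exact h (by rwa [LinearMap.mem_ker, pow_two, mul_apply])

theorem exists_isIdempotentElem_of_ker_sq_le (f : Module.End K V)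
    (h : LinearMap.ker ((f - 1) ^ 2) ≤ LinearMap.ker (f - 1)) :
    ∃ p : Module.End K V, IsIdempotentElem p ∧ f * p = p ∧ p * f = p ∧
      ∀ v, f v = v → p v = v := by
  have hc := isCompl_ker_range_of_ker_sq_le h
  have hfix : ∀ {v}, v ∈ LinearMap.ker (f - 1) ↔ f v = v := by simp [sub_eq_zero]
  refine ⟨_, Submodule.isIdempotentElem_projection hc, ?_, ?_,
    fun v hv => Submodule.projection_apply_of_mem_left hc (hfix.2 hv)⟩
  · ext v
    exact hfix.1 (Submodule.projection_apply_mem hc v)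
  · ext v
    have hfv : f v = v + (f - 1) v := by simp
    rw [mul_apply, hfv, map_add,
      Submodule.projection_apply_of_mem_right hc (LinearMap.mem_range_self _ v), add_zero]

theorem mem_spectrum_of_mem_spectrum_sub {f p : Module.End K V} (hp : IsIdempotentElem p)
    (hpf : p * f = p) (hfix : ∀ v, f v = v → p v = v) {μ : K}
    (hμ : μ ∈ spectrum K (f - p)) (hμ0 : μ ≠ 0) : μ ∈ spectrum K f ∧ μ ≠ 1 := by
  obtain ⟨v, hv⟩ := (hasEigenvalue_iff_mem_spectrum.2 hμ).exists_hasEigenvector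
  have hfpv : f v - p v = μ • v := by simpa using hv.apply_eq_smul
  have hpv : p v = 0 := by
    have : p (f v - p v) = 0 := by
      rw [map_sub, ← mul_apply, hpf, ← mul_apply, hp.eq, sub_self]
    rwa [hfpv, map_smul, smul_eq_zero, or_iff_right hμ0] at this
  have hfv : f v = μ • v := by rwa [hpv, sub_zero] at hfpv
  refine ⟨hasEigenvalue_iff_mem_spectrum.1 (hasEigenvalue_of_hasEigenvector
    ⟨mem_eigenspace_iff.2 hfv, hv.2⟩), ?_⟩
  rintro rfl
  exact hv.2 (by rw [← hfix v (by simpa using hfv), hpv])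

end Module.End

namespace Matrix

variable {ι : Type*} [Fintype ι] [DecidableEq ι]

section LinftyOpNorm

attribute [local instance] Matrix.linftyOpSeminormedAddCommGroup Matrix.linftyOpNormedRing
  Matrix.linftyOpNormedAlgebra

theorem norm_entry_le_linfty_opNorm {m n α : Type*} [Fintype m] [Fintype n]
    [SeminormedAddCommGroup α] (M : Matrix m n α) (i : m) (j : n) : ‖M i j‖ ≤ ‖M‖ := by
  rw [← coe_nnnorm, ← coe_nnnorm, NNReal.coe_le_coe, linfty_opNNNorm_def]
  exact (Finset.single_le_sum (fun _ _ => zero_le) (Finset.mem_univ j)).trans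
    (Finset.le_sup (f := fun i => ∑ j, ‖M i j‖₊) (Finset.mem_univ i))

theorem exists_norm_pow_sub_le_geometric (Q : Matrix ι ι ℂ)
    (hker : ∀ v, (Q - 1) *ᵥ ((Q - 1) *ᵥ v) = 0 → (Q - 1) *ᵥ v = 0)
    (hspec : ∀ μ ∈ spectrum ℂ Q, μ ≠ 1 → ‖μ‖ < 1) :
    ∃ (P : Matrix ι ι ℂ) (Γ γ : ℝ), 0 < Γ ∧ 0 < γ ∧ γ < 1 ∧
      ∀ k, 1 ≤ k → ∀ i j, ‖(Q ^ k) i j - P i j‖ ≤ Γ * γ ^ k := by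
  let e : Matrix ι ι ℂ ≃ₐ[ℂ] Module.End ℂ (ι → ℂ) := toLinAlgEquiv'
  have he : ∀ M v, e M v = M *ᵥ v := fun _ _ => rfl
  obtain ⟨p, hp, hfp, hpf, hfix⟩ := Module.End.exists_isIdempotentElem_of_ker_sq_le (e Q) (by
    intro v hv
    rw [LinearMap.mem_ker, ← map_one e, ← map_sub, ← map_pow, he, pow_two, ← mulVec_mulVec] at hv
    rw [LinearMap.mem_ker, ← map_one e, ← map_sub, he]
    exact hker v hv)
  set P := e.symm p
  have hρ : spectralRadius ℂ (Q - P) < 1 := by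
    rcases (spectrum ℂ (Q - P)).eq_empty_or_nonempty with hempty | hne
    · simp [spectralRadius, hempty]
    refine spectrum.spectralRadius_lt_of_forall_lt_of_nonempty hne fun μ hμ => ?_
    rcases eq_or_ne μ 0 with rfl | hμ0
    · simp
    rw [← AlgEquiv.spectrum_eq e, map_sub, e.apply_symm_apply] at hμ
    obtain ⟨hμQ, hμ1⟩ := Module.End.mem_spectrum_of_mem_spectrum_sub hp hpf hfix hμ hμ0
    rw [AlgEquiv.spectrum_eq] at hμQ
    exact_mod_cast hspec μ hμQ hμ1
  have : CompleteSpace (Matrix ι ι ℂ) := FiniteDimensional.complete ℂ _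
  obtain ⟨Γ, γ, hΓ, hγ0, hγ1, hbound⟩ :=
    exists_norm_pow_le_geometric_of_spectralRadius_lt_one (Q - P) hρ
  refine ⟨P, Γ, γ, hΓ, hγ0, hγ1, fun k hk i j => ?_⟩
  obtain ⟨k, rfl⟩ := Nat.exists_eq_add_of_le' hk
  have hP : IsIdempotentElem P := hp.map e.symm
  have hQP : Q * P = P := e.injective (by rw [map_mul, e.apply_symm_apply, hfp])
  have hPQ : P * Q = P := e.injective (by rw [map_mul, e.apply_symm_apply, hpf])
  rw [← sub_apply, ← hP.sub_pow_succ hQP hPQ]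
  exact (norm_entry_le_linfty_opNorm _ i j).trans (hbound _)

end LinftyOpNorm

section ofReal

variable {m n : Type*} [Fintype n]

theorem re_comp_map_ofReal_mulVec (R : Matrix m n ℝ) (v : n → ℂ) :
    Complex.re ∘ (R.map Complex.ofReal *ᵥ v) = R *ᵥ (Complex.re ∘ v) := by
  ext i
  simp [mulVec, dotProduct, Complex.re_sum]

theorem im_comp_map_ofReal_mulVec (R : Matrix m n ℝ) (v : n → ℂ) :
    Complex.im ∘ (R.map Complex.ofReal *ᵥ v) = R *ᵥ (Complex.im ∘ v) := by
  ext i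
  simp [mulVec, dotProduct, Complex.im_sum]

theorem map_ofReal_mulVec_eq_zero_iff (R : Matrix m n ℝ) (v : n → ℂ) :
    R.map Complex.ofReal *ᵥ v = 0 ↔ R *ᵥ (Complex.re ∘ v) = 0 ∧ R *ᵥ (Complex.im ∘ v) = 0 := by
  rw [← re_comp_map_ofReal_mulVec, ← im_comp_map_ofReal_mulVec]
  constructor
  · intro h
    simp [h]
  · rintro ⟨hre, him⟩
    funext i
    exact Complex.ext (congrFun hre i) (congrFun him i)

end ofReal

theorem exists_abs_pow_sub_le_geometric (Q : Matrix ι ι ℝ)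
    (hker : ∀ v, (Q - 1) *ᵥ ((Q - 1) *ᵥ v) = 0 → (Q - 1) *ᵥ v = 0)
    (hspec : ∀ μ : ℂ, (Q.map Complex.ofReal).charpoly.IsRoot μ → μ ≠ 1 → ‖μ‖ < 1) :
    ∃ (P : Matrix ι ι ℝ) (Γ γ : ℝ), 0 < Γ ∧ 0 < γ ∧ γ < 1 ∧
      ∀ k, 1 ≤ k → ∀ i j, |(Q ^ k) i j - P i j| ≤ Γ * γ ^ k := by
  set Qc := Q.map Complex.ofReal
  have hsub : (Q - 1).map Complex.ofReal = Qc - 1 := by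
    rw [Matrix.map_sub _ Complex.ofReal_sub,
      Matrix.map_one _ Complex.ofReal_zero Complex.ofReal_one]
  have hkerC : ∀ v, (Qc - 1) *ᵥ ((Qc - 1) *ᵥ v) = 0 → (Qc - 1) *ᵥ v = 0 := by
    intro v hv
    rw [← hsub, map_ofReal_mulVec_eq_zero_iff, re_comp_map_ofReal_mulVec,
      im_comp_map_ofReal_mulVec] at hv
    rw [← hsub, map_ofReal_mulVec_eq_zero_iff]
    exact ⟨hker _ hv.1, hker _ hv.2⟩
  obtain ⟨P, Γ, γ, hΓ, hγ0, hγ1, hbound⟩ := exists_norm_pow_sub_le_geometric Qc hkerC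
    fun μ hμ => hspec μ (mem_spectrum_iff_isRoot_charpoly.1 hμ)
  refine ⟨P.map Complex.re, Γ, γ, hΓ, hγ0, hγ1, fun k hk i j => ?_⟩
  have hpow : Qc ^ k = (Q ^ k).map Complex.ofReal :=
    (map_pow Complex.ofRealHom.mapMatrix Q k).symm
  calc |(Q ^ k) i j - P.map Complex.re i j| = |((Qc ^ k) i j - P i j).re| := by simp [hpow]
    _ ≤ ‖(Qc ^ k) i j - P i j‖ := Complex.abs_re_le_norm _
    _ ≤ Γ * γ ^ k := hbound k hk i j

theorem tendsto_of_forall_abs_sub_le {m n : Type*} {f : ℕ → Matrix m n ℝ} {P : Matrix m n ℝ}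
    {Γ γ : ℝ} (hγ0 : 0 ≤ γ) (hγ1 : γ < 1)
    (h : ∀ k, 1 ≤ k → ∀ i j, |f k i j - P i j| ≤ Γ * γ ^ k) : Tendsto f atTop (𝓝 P) := by
  refine tendsto_pi_nhds.2 fun i => tendsto_pi_nhds.2 fun j => ?_
  refine tendsto_iff_norm_sub_tendsto_zero.2 <| squeeze_zero_norm' ?_
    (by simpa using (tendsto_pow_atTop_nhds_zero_of_lt_one hγ0 hγ1).const_mul Γ)
  filter_upwards [eventually_ge_atTop 1] with k hk
  simpa using h k hk i j

section Blocks

variable {R m : Type*} [Fintype m] [DecidableEq m]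

theorem fromBlocks_zero₁₂_pow [Semiring R] (A : Matrix ι ι R) (C : Matrix m ι R)
    (D : Matrix m m R) (k : ℕ) :
    ∃ C', fromBlocks A 0 C D ^ k = fromBlocks (A ^ k) 0 C' (D ^ k) := by
  induction k with
  | zero => exact ⟨0, by simp [← fromBlocks_one]⟩
  | succ k ih =>
    obtain ⟨C', hC'⟩ := ih
    exact ⟨C' * A + D ^ k * C, by simp [pow_succ, hC', fromBlocks_multiply]⟩

theorem tendsto_pow_toBlocks₁₁_of_fromBlocks_zero₁₂ [Semiring R] [TopologicalSpace R]
    [T2Space R] {A : Matrix ι ι R} {C : Matrix m ι R} {D : Matrix m m R}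
    {P : Matrix (ι ⊕ m) (ι ⊕ m) R} (h : Tendsto (fromBlocks A 0 C D ^ ·) atTop (𝓝 P)) :
    Tendsto (A ^ ·) atTop (𝓝 P.toBlocks₁₁) ∧ P.toBlocks₁₂ = 0 := by
  have hblocks : ∀ k, (fromBlocks A 0 C D ^ k).toBlocks₁₁ = A ^ k ∧
      (fromBlocks A 0 C D ^ k).toBlocks₁₂ = 0 := fun k => by
    obtain ⟨C', hC'⟩ := fromBlocks_zero₁₂_pow A C D k
    simp [hC']
  constructor
  · exact ((continuous_id.matrix_submatrix Sum.inl Sum.inl).tendsto P |>.comp h).congr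
      fun k => (hblocks k).1
  · exact tendsto_nhds_unique ((continuous_id.matrix_submatrix Sum.inl Sum.inr).tendsto P |>.comp h)
      (tendsto_const_nhds.congr fun k => (hblocks k).2.symm)

end Blocks

theorem isClosed_rowStochastic : IsClosed (rowStochastic ℝ ι : Set (Matrix ι ι ℝ)) := by
  have hnonneg : IsClosed {M : Matrix ι ι ℝ | ∀ i j, 0 ≤ M i j} := by
    simp only [Set.ofPred_forall]
    exact isClosed_iInter fun i => isClosed_iInter fun j =>
      isClosed_le continuous_const (continuous_id.matrix_elem i j)
  exact hnonneg.inter (isClosed_eq (continuous_id.matrix_mulVec continuous_const) continuous_const)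

theorem mem_rowStochastic_of_tendsto_pow {A B : Matrix ι ι ℝ} (hA : A ∈ rowStochastic ℝ ι)
    (h : Tendsto (A ^ ·) atTop (𝓝 B)) : B ∈ rowStochastic ℝ ι :=
  isClosed_rowStochastic.mem_of_tendsto h (Eventually.of_forall fun k => pow_mem hA k)

theorem le_of_mulVec_eq_self_of_pos_col {S : Matrix ι ι ℝ} (hS : S ∈ rowStochastic ℝ ι)
    {j₀ : ι} (hpos : ∀ i, 0 < S i j₀) {c : ι → ℝ} (hc : S *ᵥ c = c) (i : ι) : c i ≤ c j₀ := by
  have : Nonempty ι := ⟨j₀⟩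
  obtain ⟨i₀, hi₀⟩ := Finite.exists_max c
  -- `c i₀` is an average of values `≤ c i₀` with positive weight on `c j₀`
  have hsum : ∑ q, S i₀ q * (c i₀ - c q) = 0 := by
    simp only [mul_sub, Finset.sum_sub_distrib, ← Finset.sum_mul, sum_row_of_mem_rowStochastic hS,
      one_mul]
    rw [sub_eq_zero]
    exact (congrFun hc i₀).symm
  have hterm := (Finset.sum_eq_zero_iff_of_nonneg fun q _ =>
    mul_nonneg (nonneg_of_mem_rowStochastic hS) (sub_nonneg.2 (hi₀ q))).1 hsum j₀
    (Finset.mem_univ _)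
  have hmax : c i₀ = c j₀ := by simpa [sub_eq_zero, (hpos i₀).ne'] using hterm
  exact hmax ▸ hi₀ i

theorem eq_of_mulVec_eq_self_of_pos_col {S : Matrix ι ι ℝ} (hS : S ∈ rowStochastic ℝ ι)
    {j₀ : ι} (hpos : ∀ i, 0 < S i j₀) {c : ι → ℝ} (hc : S *ᵥ c = c) (i : ι) : c i = c j₀ :=
  le_antisymm (le_of_mulVec_eq_self_of_pos_col hS hpos hc i)
    (neg_le_neg_iff.1 (le_of_mulVec_eq_self_of_pos_col hS hpos (c := -c)
      (by rw [mulVec_neg, hc]) i))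

theorem row_eq_of_tendsto_pow {A B : Matrix ι ι ℝ} (hA : A ∈ rowStochastic ℝ ι) {k₀ : ℕ}
    {j₀ : ι} (hpos : ∀ i, 0 < (A ^ k₀) i j₀) (h : Tendsto (A ^ ·) atTop (𝓝 B)) (i : ι) :
    B i = B j₀ := by
  funext l
  refine eq_of_mulVec_eq_self_of_pos_col (pow_mem hA k₀) hpos (c := fun q => B q l) ?_ i
  funext i'
  exact congrFun (congrFun (pow_mul_eq_of_tendsto_pow h k₀) i') l

end Matrix

theorem flue_theorem3e_general
    (n : ℕ)
    (A : Matrix (Fin n) (Fin n) ℝ)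
    (hA_nonneg : ∀ i j, 0 ≤ A i j)
    (hA_rows : ∀ i, ∑ j, A i j = 1)
    (hA_pos : ∃ k₀ : ℕ, 1 ≤ k₀ ∧ ∃ j₀ : Fin n, ∀ i, 0 < (A ^ k₀) i j₀)
    (D : Matrix (Fin n) (Fin n) ℝ)
    (Q : Matrix (Fin n ⊕ Fin n) (Fin n ⊕ Fin n) ℝ)
    (hQ : Q = Matrix.fromBlocks A 0 (1 - A) D)
    (hker : ∀ v : Fin n ⊕ Fin n → ℝ,
      (Q - 1).mulVec ((Q - 1).mulVec v) = 0 ↔ (Q - 1).mulVec v = 0)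
    (hspec : ∀ μ : ℂ, ((Q.map Complex.ofReal).charpoly).IsRoot μ → μ ≠ 1 →
      ‖μ‖ < 1) :
    ∃ (P : Matrix (Fin n ⊕ Fin n) (Fin n ⊕ Fin n) ℝ) (Γ γ : ℝ),
      0 < Γ ∧ 0 < γ ∧ γ < 1 ∧
      (∀ k : ℕ, 1 ≤ k → ∀ i j, |(Q ^ k) i j - P i j| ≤ Γ * γ ^ k) ∧
      ∃ π : Fin n → ℝ,
        (∀ l, 0 ≤ π l) ∧ (∑ l, π l = 1) ∧ Matrix.vecMul π A = π ∧
        (∀ j l : Fin n, P (Sum.inl j) (Sum.inl l) = π l) ∧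
        (∀ j l : Fin n, P (Sum.inl j) (Sum.inr l) = 0) := by
  obtain ⟨k₀, -, j₀, hj₀⟩ := hA_pos
  have hA : A ∈ rowStochastic ℝ (Fin n) := mem_rowStochastic_iff_sum.2 ⟨hA_nonneg, hA_rows⟩
  obtain ⟨P, Γ, γ, hΓ, hγ0, hγ1, hbound⟩ :=
    Q.exists_abs_pow_sub_le_geometric (fun v => (hker v).1) hspec
  subst hQ
  obtain ⟨hAP, hP₁₂⟩ := tendsto_pow_toBlocks₁₁_of_fromBlocks_zero₁₂
    (tendsto_of_forall_abs_sub_le hγ0.le hγ1 hbound)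
  have hB := mem_rowStochastic_of_tendsto_pow hA hAP
  have hstat : P.toBlocks₁₁ j₀ ᵥ* A = P.toBlocks₁₁ j₀ := by
    rw [← mul_apply_eq_vecMul, mul_eq_of_tendsto_pow hAP]
  refine ⟨P, Γ, γ, hΓ, hγ0, hγ1, hbound, P.toBlocks₁₁ j₀, fun l => hB.1 j₀ l,
    sum_row_of_mem_rowStochastic hB j₀, hstat,
    fun j l => congrFun (row_eq_of_tendsto_pow hA hj₀ hAP j) l,
    fun j l => congrFun (congrFun hP₁₂ j) l⟩

/-- **Theorem 3e of the FLUE paper.**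
Let `A` be an `n×n` row-stochastic matrix some power of which has a strictly
positive column, `D` an `n×n` column-stochastic matrix, and
`Q = [[A, 0], [I - A, D]]` the `2n×2n` block lower-triangular matrix.
If the eigenvalue `1` of `Q` is semisimple (`ker (Q-I)² = ker (Q-I)`) and all
other complex roots of the characteristic polynomial of `Q` lie strictly inside
the unit disc, then the powers of `Q` converge geometrically to a matrix `P`
whose first `n` rows are identical, equal to `(πᵀ, 0)` for a stationary
distribution `π` of `A`. -/
theorem flue_theorem3e
    (n : ℕ) (hn : 0 < n)
    (A : Matrix (Fin n) (Fin n) ℝ)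
    (hA_nonneg : ∀ i j, 0 ≤ A i j)
    (hA_rows : ∀ i, ∑ j, A i j = 1)
    (hA_pos : ∃ k₀ : ℕ, 1 ≤ k₀ ∧ ∃ j₀ : Fin n, ∀ i, 0 < (A ^ k₀) i j₀)
    (D : Matrix (Fin n) (Fin n) ℝ)
    (hD_nonneg : ∀ i j, 0 ≤ D i j)
    (hD_cols : ∀ j, ∑ i, D i j = 1)
    (Q : Matrix (Fin n ⊕ Fin n) (Fin n ⊕ Fin n) ℝ)
    (hQ : Q = Matrix.fromBlocks A 0 (1 - A) D)
    (hker : ∀ v : Fin n ⊕ Fin n → ℝ,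
      (Q - 1).mulVec ((Q - 1).mulVec v) = 0 ↔ (Q - 1).mulVec v = 0)
    (hspec : ∀ μ : ℂ, ((Q.map Complex.ofReal).charpoly).IsRoot μ → μ ≠ 1 →
      ‖μ‖ < 1) :
    ∃ (P : Matrix (Fin n ⊕ Fin n) (Fin n ⊕ Fin n) ℝ) (Γ γ : ℝ),
      0 < Γ ∧ 0 < γ ∧ γ < 1 ∧
      (∀ k : ℕ, 1 ≤ k → ∀ i j, |(Q ^ k) i j - P i j| ≤ Γ * γ ^ k) ∧
      ∃ π : Fin n → ℝ,
        (∀ l, 0 ≤ π l) ∧ (∑ l, π l = 1) ∧ Matrix.vecMul π A = π ∧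
        (∀ j l : Fin n, P (Sum.inl j) (Sum.inl l) = π l) ∧
        (∀ j l : Fin n, P (Sum.inl j) (Sum.inr l) = 0) :=
  flue_theorem3e_general n A hA_nonneg hA_rows hA_pos D Q hQ hker hspec
end

section
/- Let n be a positive integer. Let A be an n×n row-stochastic real matrix such that 1 is a root of multiplicity one of the characteristic polynomial of A. Let D be an n×n column-stochastic real matrix such that 1 is a root of multiplicity two of the characteristic polynomial of D and the fixed space {w ∈ ℝ^n : D·w = w} has dimension 2. Let Q be the 2n×2n block matrix Q = [[A, 0], [I − A, D]]. Then: 1 is a root of multiplicity three of the characteristic polynomial of Q; the fixed space {v ∈ ℝ^{2n} : Q·v = v} has dimension 3 (so the eigenvalue 1 of Q is semisimple); every complex root μ of the characteristic polynomial of Q satisfies |μ| ≤ 1; and the spectral radius of Q equals 1. -/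
/-!
`Q` is block lower triangular, so its characteristic polynomial is that of `A` times that of `D`,
which gives the multiplicity of `1` and, after complexification, shows that every eigenvalue of `Q`
is one of `A` or of `D`. By Gershgorin's theorem an eigenvalue of a row-stochastic matrix has
modulus at most the largest row sum `1`; `D` is handled through its transpose. A fixed vector
`(x, y)` of `Q` satisfies `A x = x` and `(I - A) x + D y = y`, and the first equation kills the
term `(I - A) x`, so the fixed space of `Q` is the product of those of `A` and `D`. Finally the
fixed space of `A` is a line because the geometric multiplicity of `1` is positive and at most its
algebraic multiplicity `1`.
-/

open Polynomial Module Matrix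

namespace Submodule

variable {R M N : Type*} [Semiring R] [AddCommMonoid M] [Module R M] [AddCommMonoid N] [Module R N]

def prodEquiv (p : Submodule R M) (q : Submodule R N) : p.prod q ≃ₗ[R] p × q where
  toFun x := (⟨x.1.1, x.2.1⟩, ⟨x.1.2, x.2.2⟩)
  invFun x := ⟨(x.1, x.2), x.1.2, x.2.2⟩
  map_add' _ _ := rfl
  map_smul' _ _ := rfl

theorem finrank_prod {K V W : Type*} [DivisionRing K] [AddCommGroup V] [Module K V]
    [AddCommGroup W] [Module K W] [FiniteDimensional K V] [FiniteDimensional K W]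
    (p : Submodule K V) (q : Submodule K W) :
    finrank K (p.prod q) = finrank K p + finrank K q := by
  rw [(prodEquiv p q).finrank_eq, Module.finrank_prod]

end Submodule

namespace Matrix

variable {ι K : Type*} [Fintype ι] [DecidableEq ι]

theorem exists_norm_le_sum_norm_of_hasEigenvalue [NormedField K] {M : Matrix ι ι K} {μ : K}
    (hμ : Module.End.HasEigenvalue (toLin' M) μ) : ∃ k, ‖μ‖ ≤ ∑ j, ‖M k j‖ := by
  obtain ⟨k, hk⟩ := eigenvalue_mem_ball hμ
  refine ⟨k, ?_⟩
  calc ‖μ‖ ≤ ‖μ - M k k‖ + ‖M k k‖ := norm_le_norm_sub_add μ (M k k)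
    _ ≤ ∑ j ∈ Finset.univ.erase k, ‖M k j‖ + ‖M k k‖ := by
      gcongr
      simpa [dist_eq_norm] using hk
    _ = ∑ j, ‖M k j‖ := Finset.sum_erase_add _ _ (Finset.mem_univ k)

theorem norm_le_one_of_isRoot_charpoly_of_mem_rowStochastic {M : Matrix ι ι ℝ}
    (hM : M ∈ rowStochastic ℝ ι) {μ : ℂ} (hμ : (M.map Complex.ofReal).charpoly.IsRoot μ) :
    ‖μ‖ ≤ 1 := by
  rw [← charpoly_toLin', ← Module.End.hasEigenvalue_iff_isRoot_charpoly] at hμ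
  obtain ⟨k, hk⟩ := exists_norm_le_sum_norm_of_hasEigenvalue hμ
  simpa [abs_of_nonneg (nonneg_of_mem_rowStochastic hM), sum_row_of_mem_rowStochastic hM] using hk

theorem norm_le_one_of_isRoot_charpoly_of_mem_colStochastic {M : Matrix ι ι ℝ}
    (hM : M ∈ colStochastic ℝ ι) {μ : ℂ} (hμ : (M.map Complex.ofReal).charpoly.IsRoot μ) :
    ‖μ‖ ≤ 1 := by
  refine norm_le_one_of_isRoot_charpoly_of_mem_rowStochastic
    (transpose_mem_rowStochastic_iff_mem_colStochastic.mpr hM) ?_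
  rwa [transpose_map, charpoly_transpose]

variable [Field K]

theorem ker_toLin'_sub_one_eq_eigenspace (M : Matrix ι ι K) :
    LinearMap.ker (toLin' (M - 1)) = Module.End.eigenspace (toLin' M) 1 := by
  rw [Module.End.eigenspace_def, one_smul, map_sub, toLin'_one, Module.End.one_eq_id]

theorem finrank_ker_toLin'_sub_one_le (M : Matrix ι ι K) :
    finrank K (LinearMap.ker (toLin' (M - 1))) ≤ M.charpoly.rootMultiplicity 1 := by
  rw [ker_toLin'_sub_one_eq_eigenspace, ← charpoly_toLin']
  exact LinearMap.finrank_eigenspace_le _ _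

theorem finrank_ker_toLin'_sub_one_eq_one_of_rootMultiplicity_eq_one {M : Matrix ι ι K}
    (hM : M.charpoly.rootMultiplicity 1 = 1) :
    finrank K (LinearMap.ker (toLin' (M - 1))) = 1 := by
  refine le_antisymm (hM ▸ finrank_ker_toLin'_sub_one_le M) ?_
  have hroot : M.charpoly.IsRoot 1 :=
    (rootMultiplicity_pos (charpoly_monic M).ne_zero).mp (by omega)
  rw [← charpoly_toLin', ← Module.End.hasEigenvalue_iff_isRoot_charpoly] at hroot
  rwa [ker_toLin'_sub_one_eq_eigenspace, Nat.one_le_iff_ne_zero, Ne, Submodule.finrank_eq_zero]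

theorem ker_toLin'_fromBlocks_sub_one (A D : Matrix ι ι K) :
    LinearMap.ker (toLin' (fromBlocks A 0 (1 - A) D - 1)) =
      ((LinearMap.ker (toLin' (A - 1))).prod (LinearMap.ker (toLin' (D - 1)))).comap
        (LinearEquiv.sumArrowLequivProdArrow ι ι K K).toLinearMap := by
  ext v
  obtain ⟨x, y, rfl⟩ : ∃ x y, v = Sum.elim x y := ⟨v ∘ Sum.inl, v ∘ Sum.inr, by simp⟩
  change (fromBlocks A 0 (1 - A) D - 1) *ᵥ Sum.elim x y = 0 ↔
    (A - 1) *ᵥ x = 0 ∧ (D - 1) *ᵥ y = 0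
  simp only [sub_mulVec, one_mulVec, sub_eq_zero, fromBlocks_mulVec, zero_mulVec, add_zero,
    Sum.elim_comp_inl, Sum.elim_comp_inr, Sum.elim_eq_iff]
  refine and_congr_right fun hx => ?_
  rw [hx, sub_self, zero_add]

theorem finrank_ker_toLin'_fromBlocks_sub_one (A D : Matrix ι ι K) :
    finrank K (LinearMap.ker (toLin' (fromBlocks A 0 (1 - A) D - 1))) =
      finrank K (LinearMap.ker (toLin' (A - 1))) +
        finrank K (LinearMap.ker (toLin' (D - 1))) := by
  rw [ker_toLin'_fromBlocks_sub_one, Submodule.comap_equiv_eq_map_symm,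
    LinearEquiv.finrank_map_eq, Submodule.finrank_prod]

end Matrix

namespace spectrum

theorem spectralRadius_eq_nnnorm_of_mem {𝕜 R : Type*} [NormedField 𝕜] [Ring R]
    [Algebra 𝕜 R] {a : R} {μ : 𝕜} (hμ : μ ∈ spectrum 𝕜 a)
    (hle : ∀ ν ∈ spectrum 𝕜 a, ‖ν‖ ≤ ‖μ‖) : spectralRadius 𝕜 a = ‖μ‖₊ :=
  le_antisymm (iSup₂_le fun ν hν => by exact_mod_cast hle ν hν)
    (le_iSup₂_of_le μ hμ le_rfl)

end spectrum

theorem flue_proposition1_general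
    (n : ℕ)
    (A : Matrix (Fin n) (Fin n) ℝ)
    (hA_nonneg : ∀ i j, 0 ≤ A i j)
    (hA_rows : ∀ i, ∑ j, A i j = 1)
    (hA_mult : Polynomial.rootMultiplicity 1 A.charpoly = 1)
    (D : Matrix (Fin n) (Fin n) ℝ)
    (hD_nonneg : ∀ i j, 0 ≤ D i j)
    (hD_cols : ∀ j, ∑ i, D i j = 1)
    (hD_mult : Polynomial.rootMultiplicity 1 D.charpoly = 2)
    (hD_dim : Module.finrank ℝ (LinearMap.ker (Matrix.toLin' (D - 1))) = 2)
    (Q : Matrix (Fin n ⊕ Fin n) (Fin n ⊕ Fin n) ℝ)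
    (hQ : Q = Matrix.fromBlocks A 0 (1 - A) D) :
    Polynomial.rootMultiplicity 1 Q.charpoly = 3 ∧
    Module.finrank ℝ (LinearMap.ker (Matrix.toLin' (Q - 1))) = 3 ∧
    (∀ μ : ℂ, ((Q.map Complex.ofReal).charpoly).IsRoot μ → ‖μ‖ ≤ 1) ∧
    spectralRadius ℂ (Q.map Complex.ofReal) = 1 := by
  have hA : A ∈ rowStochastic ℝ (Fin n) := mem_rowStochastic_iff_sum.mpr ⟨hA_nonneg, hA_rows⟩
  have hD : D ∈ colStochastic ℝ (Fin n) := mem_colStochastic_iff_sum.mpr ⟨hD_nonneg, hD_cols⟩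
  have hmult : rootMultiplicity 1 Q.charpoly = 3 := by
    rw [hQ, charpoly_fromBlocks_zero₁₂,
      rootMultiplicity_mul ((charpoly_monic A).mul (charpoly_monic D)).ne_zero, hA_mult, hD_mult]
  have hroots : ∀ μ : ℂ, (Q.map Complex.ofReal).charpoly.IsRoot μ → ‖μ‖ ≤ 1 := by
    intro μ hμ
    rw [hQ, fromBlocks_map, Matrix.map_zero _ Complex.ofReal_zero, charpoly_fromBlocks_zero₁₂,
      IsRoot, eval_mul, mul_eq_zero] at hμ
    exact hμ.elim (norm_le_one_of_isRoot_charpoly_of_mem_rowStochastic hA)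
      (norm_le_one_of_isRoot_charpoly_of_mem_colStochastic hD)
  have hone : (1 : ℂ) ∈ spectrum ℂ (Q.map Complex.ofReal) := by
    have hroot : Q.charpoly.IsRoot 1 :=
      (rootMultiplicity_pos (charpoly_monic Q).ne_zero).mp (by omega)
    rw [mem_spectrum_iff_isRoot_charpoly, ← map_one Complex.ofRealHom]
    exact charpoly_map Q Complex.ofRealHom ▸ hroot.map
  refine ⟨hmult, ?_, hroots, ?_⟩
  · rw [hQ, finrank_ker_toLin'_fromBlocks_sub_one,
      finrank_ker_toLin'_sub_one_eq_one_of_rootMultiplicity_eq_one hA_mult, hD_dim]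
  · simpa using spectrum.spectralRadius_eq_nnnorm_of_mem hone fun ν hν => by
      simpa using hroots ν (mem_spectrum_iff_isRoot_charpoly.mp hν)

/-- **Proposition 1 of the FLUE paper.**
Let `A` be an `n×n` row-stochastic matrix for which `1` is a simple root of the
characteristic polynomial, and `D` an `n×n` column-stochastic matrix for which
`1` is a root of multiplicity two of the characteristic polynomial and whose
fixed space is two-dimensional.  Then for the block matrix
`Q = [[A, 0], [I - A, D]]`: `1` is a root of multiplicity three of the
characteristic polynomial of `Q`, the fixed space of `Q` is three-dimensional
(so the eigenvalue `1` is semisimple), every complex eigenvalue of `Q` has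
modulus at most `1`, and the spectral radius of `Q` equals `1`. -/
theorem flue_proposition1
    (n : ℕ) (hn : 0 < n)
    (A : Matrix (Fin n) (Fin n) ℝ)
    (hA_nonneg : ∀ i j, 0 ≤ A i j)
    (hA_rows : ∀ i, ∑ j, A i j = 1)
    (hA_mult : Polynomial.rootMultiplicity 1 A.charpoly = 1)
    (D : Matrix (Fin n) (Fin n) ℝ)
    (hD_nonneg : ∀ i j, 0 ≤ D i j)
    (hD_cols : ∀ j, ∑ i, D i j = 1)
    (hD_mult : Polynomial.rootMultiplicity 1 D.charpoly = 2)
    (hD_dim : Module.finrank ℝ (LinearMap.ker (Matrix.toLin' (D - 1))) = 2)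
    (Q : Matrix (Fin n ⊕ Fin n) (Fin n ⊕ Fin n) ℝ)
    (hQ : Q = Matrix.fromBlocks A 0 (1 - A) D) :
    Polynomial.rootMultiplicity 1 Q.charpoly = 3 ∧
    Module.finrank ℝ (LinearMap.ker (Matrix.toLin' (Q - 1))) = 3 ∧
    (∀ μ : ℂ, ((Q.map Complex.ofReal).charpoly).IsRoot μ → ‖μ‖ ≤ 1) ∧
    spectralRadius ℂ (Q.map Complex.ofReal) = 1 :=
  flue_proposition1_general n A hA_nonneg hA_rows hA_mult D hD_nonneg hD_cols hD_mult hD_dim Q hQ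
end

section
/- Let n be a positive integer, let A be an n×n row-stochastic real matrix, let D be an n×n column-stochastic real matrix, let ε ∈ ℝ, set T = I − D, and define the 2n×2n real matrix Q_ε = [[A, ε·T], [I − A, D − ε·T]]. Then: (i) Q_ε·(1, 0) = (1, 0); (ii) for every w ∈ ℝ^n with D·w = w one has Q_ε·(0, w) = (0, w); (iii) for every c ≠ 0 there is no vector u ∈ ℝ^{2n} with (Q_ε − I)·u = (c·1, 0); and (iv) for every w ∈ ℝ^n with D·w = w and Σ_i w_i ≠ 0 there is no vector u ∈ ℝ^{2n} with (Q_ε − I)·u = (0, w). -/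
/-!
Every column of `Q_ε` sums to `1`: the left block column is `A` stacked on `I - A`, and in the
right block column the two copies of `ε T` cancel, leaving a column of the column-stochastic `D`.
Hence `1ᵀ (Q_ε - I) = 0`, so every vector in the range of `Q_ε - I` has coordinate sum `0`,
while `(c 1, 0)` has sum `n c` and `(0, w)` has sum `∑ w`.
-/

namespace Matrix

variable {m R : Type*} [Fintype m] [Ring R]

theorem fromBlocks_sub_mulVec_elim_zero {A C D T : Matrix m m R} {w : m → R}
    (hT : T *ᵥ w = 0) (hD : D *ᵥ w = w) :
    fromBlocks A T C (D - T) *ᵥ Sum.elim 0 w = Sum.elim (0 : m → R) w := by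
  rw [fromBlocks_mulVec]
  simp [sub_mulVec, hT, hD]

variable [DecidableEq m]

theorem sum_sub_one_mulVec_eq_zero {M : Matrix m m R} (hM : 1 ᵥ* M = 1) (u : m → R) :
    ∑ i, ((M - 1) *ᵥ u) i = 0 := by
  rw [← one_dotProduct, dotProduct_mulVec, vecMul_sub, hM, vecMul_one, sub_self, zero_dotProduct]

theorem not_exists_sub_one_mulVec_eq {M : Matrix m m R} (hM : 1 ᵥ* M = 1) {v : m → R}
    (hv : ∑ i, v i ≠ 0) : ¬∃ u, (M - 1) *ᵥ u = v := by
  rintro ⟨u, rfl⟩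
  exact hv (sum_sub_one_mulVec_eq_zero hM u)

theorem one_vecMul_fromBlocks_one_sub {A D T : Matrix m m R} (hD : 1 ᵥ* D = 1) :
    1 ᵥ* fromBlocks A T (1 - A) (D - T) = 1 := by
  rw [← Sum.elim_one_one, vecMul_fromBlocks]
  simp [vecMul_sub, hD]

theorem fromBlocks_one_sub_mulVec_elim_one_zero {A B D : Matrix m m R} (hA : A *ᵥ 1 = 1) :
    fromBlocks A B (1 - A) D *ᵥ Sum.elim 1 0 = Sum.elim (1 : m → R) 0 := by
  rw [fromBlocks_mulVec]
  simp [sub_mulVec, hA]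

end Matrix

theorem flue_lemma_L9n_general
    (n : ℕ) (hn : 0 < n)
    (A : Matrix (Fin n) (Fin n) ℝ)
    (hA_rows : ∀ i, ∑ j, A i j = 1)
    (D : Matrix (Fin n) (Fin n) ℝ)
    (hD_cols : ∀ j, ∑ i, D i j = 1)
    (ε : ℝ)
    (T : Matrix (Fin n) (Fin n) ℝ) (hT : T = 1 - D)
    (Qε : Matrix (Fin n ⊕ Fin n) (Fin n ⊕ Fin n) ℝ)
    (hQε : Qε = Matrix.fromBlocks A (ε • T) (1 - A) (D - ε • T)) :
    (Qε.mulVec (Sum.elim (fun _ => (1 : ℝ)) (0 : Fin n → ℝ)) = Sum.elim (fun _ => (1 : ℝ)) (0 : Fin n → ℝ)) ∧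
    (∀ w : Fin n → ℝ, D.mulVec w = w →
      Qε.mulVec (Sum.elim (0 : Fin n → ℝ) w) = Sum.elim (0 : Fin n → ℝ) w) ∧
    (∀ c : ℝ, c ≠ 0 →
      ¬∃ u : Fin n ⊕ Fin n → ℝ, (Qε - 1).mulVec u = Sum.elim (fun _ => c) (0 : Fin n → ℝ)) ∧
    (∀ w : Fin n → ℝ, D.mulVec w = w → (∑ i, w i) ≠ 0 →
      ¬∃ u : Fin n ⊕ Fin n → ℝ, (Qε - 1).mulVec u = Sum.elim (0 : Fin n → ℝ) w) := by
  have hA : A.mulVec 1 = 1 := funext fun i => by simpa [Matrix.mulVec, dotProduct] using hA_rows i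
  have hD : Matrix.vecMul 1 D = 1 := funext fun j => by simpa [Matrix.vecMul, dotProduct] using hD_cols j
  have hQ : Matrix.vecMul 1 Qε = 1 := hQε ▸ Matrix.one_vecMul_fromBlocks_one_sub hD
  subst hQε
  refine ⟨Matrix.fromBlocks_one_sub_mulVec_elim_one_zero hA,
    fun w hw => Matrix.fromBlocks_sub_mulVec_elim_zero ?_ hw,
    fun c hc => Matrix.not_exists_sub_one_mulVec_eq hQ ?_,
    fun w _ hw => Matrix.not_exists_sub_one_mulVec_eq hQ (by simpa [Fintype.sum_sum_type] using hw)⟩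
  · rw [hT, Matrix.smul_mulVec, Matrix.sub_mulVec, Matrix.one_mulVec, hw, sub_self, smul_zero]
  · simp [Fintype.sum_sum_type, hn.ne', hc]

/-- **Lemma 20 (L9n) of the FLUE paper.**
With `A` row stochastic, `D` column stochastic, `T = I - D`, and the perturbed
block matrix `Q_ε = [[A, ε·T], [I - A, D - ε·T]]`:
(i) `(1, 0)` is fixed by `Q_ε`;
(ii) `(0, w)` is fixed by `Q_ε` for every fixed vector `w` of `D`;
(iii) for `c ≠ 0` no vector `u` satisfies `(Q_ε - I)·u = (c·1, 0)`; and
(iv) for every fixed vector `w` of `D` with nonzero coordinate sum, no vector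
`u` satisfies `(Q_ε - I)·u = (0, w)`.  In particular there are no generalized
eigenvectors of order two above these eigenvectors of eigenvalue `1`. -/
theorem flue_lemma_L9n
    (n : ℕ) (hn : 0 < n)
    (A : Matrix (Fin n) (Fin n) ℝ)
    (hA_nonneg : ∀ i j, 0 ≤ A i j)
    (hA_rows : ∀ i, ∑ j, A i j = 1)
    (D : Matrix (Fin n) (Fin n) ℝ)
    (hD_nonneg : ∀ i j, 0 ≤ D i j)
    (hD_cols : ∀ j, ∑ i, D i j = 1)
    (ε : ℝ)
    (T : Matrix (Fin n) (Fin n) ℝ) (hT : T = 1 - D)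
    (Qε : Matrix (Fin n ⊕ Fin n) (Fin n ⊕ Fin n) ℝ)
    (hQε : Qε = Matrix.fromBlocks A (ε • T) (1 - A) (D - ε • T)) :
    (Qε.mulVec (Sum.elim (fun _ => (1 : ℝ)) (0 : Fin n → ℝ)) = Sum.elim (fun _ => (1 : ℝ)) (0 : Fin n → ℝ)) ∧
    (∀ w : Fin n → ℝ, D.mulVec w = w →
      Qε.mulVec (Sum.elim (0 : Fin n → ℝ) w) = Sum.elim (0 : Fin n → ℝ) w) ∧
    (∀ c : ℝ, c ≠ 0 →
      ¬∃ u : Fin n ⊕ Fin n → ℝ, (Qε - 1).mulVec u = Sum.elim (fun _ => c) (0 : Fin n → ℝ)) ∧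
    (∀ w : Fin n → ℝ, D.mulVec w = w → (∑ i, w i) ≠ 0 →
      ¬∃ u : Fin n ⊕ Fin n → ℝ, (Qε - 1).mulVec u = Sum.elim (0 : Fin n → ℝ) w) :=
  flue_lemma_L9n_general n hn A hA_rows D hD_cols ε T hT Qε hQε
end

section
/- Adopt the ITERATION SETTING. Assume additionally that Σ_{k=0}^∞ α_k² < ∞, that m ≤ N, and that the first m rows of P coincide, i.e. P_{j,l} = P_{q,l} for all j, q ∈ {1,…,m} and all l. Then for all j, q ∈ {1,…,m}: (a) Σ_{k=0}^∞ α_k · ‖z_j(k) − z_q(k)‖ < ∞, and (b) lim_{k→∞} ‖z_j(k) − z_q(k)‖ = 0; that is, the first m components of the iterates reach consensus. -/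
/-!
Unrolling the recursion gives `z(k) = Oᵏ z(0) - ∑_{s<k} α_s O^{k-1-s} g(z(s))`. As rows `j` and `q`
of `P` agree, rows `j` and `q` of `Oᵉ` differ entrywise by at most `C γᵉ`, hence
`‖z_j(k) - z_q(k)‖ ≤ C' (γᵏ + c_k)` with `c_k = ∑_{s<k} |α_s| γ^{k-1-s}`. By Cauchy–Schwarz,
`c_k² ≤ (1 - γ)⁻¹ ∑_{s<k} α_s² γ^{k-1-s}`, a Cauchy product of two summable sequences, so `(c_k)`
is square-summable; this gives both the summability of `α_k c_k` and `c_k → 0`.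
-/

open Filter Finset Topology

theorem eq_pow_smul_add_sum_of_succ_eq {G M : Type*} [Monoid G] [AddCommMonoid M]
    [DistribMulAction G M] {a : G} {x b : ℕ → M} (h : ∀ k, x (k + 1) = a • x k + b k) (k : ℕ) :
    x k = a ^ k • x 0 + ∑ s ∈ range k, a ^ (k - 1 - s) • b s := by
  induction k with
  | zero => simp
  | succ k ih =>
    have hshift : ∀ s ∈ range k, a • a ^ (k - 1 - s) • b s = a ^ (k + 1 - 1 - s) • b s := by
      intro s hs
      rw [smul_smul, ← pow_succ', show k - 1 - s + 1 = k + 1 - 1 - s by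
        have := mem_range.1 hs; omega]
    rw [h, ih, smul_add, smul_smul, ← pow_succ', smul_sum, sum_congr rfl hshift,
      sum_range_succ, add_assoc]
    simp

section MatrixAction

variable (n R E : Type*) [Fintype n] [DecidableEq n] [CommSemiring R] [AddCommMonoid E]
  [Module R E]

def Matrix.toEndPi : Matrix n n R →+* Module.End R (n → E) :=
  (endVecRingEquivMatrixEnd n R E).symm.toRingHom.comp (algebraMap R (Module.End R E)).mapMatrix

variable {n R E}

@[simp]
theorem Matrix.toEndPi_apply (M : Matrix n n R) (v : n → E) (i : n) :
    Matrix.toEndPi n R E M v i = ∑ l, M i l • v l :=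
  rfl

end MatrixAction

section RowDifference

variable {n E : Type*} [Fintype n] [DecidableEq n] [SeminormedAddCommGroup E] [NormedSpace ℝ E]

theorem abs_pow_apply_sub_pow_apply_le {O P : Matrix n n ℝ} {Γ γ : ℝ} (hγ0 : 0 ≤ γ)
    (hOP : ∀ k : ℕ, 1 ≤ k → ∀ j l, |(O ^ k) j l - P j l| ≤ Γ * γ ^ k) {j q : n}
    (hP : ∀ l, P j l = P q l) (e : ℕ) (l : n) :
    |(O ^ e) j l - (O ^ e) q l| ≤ max (2 * Γ) 1 * γ ^ e := by
  rcases Nat.eq_zero_or_pos e with rfl | he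
  · simp only [pow_zero, Matrix.one_apply, mul_one]
    refine le_trans ?_ (le_max_right _ _)
    split_ifs <;> norm_num
  · calc |(O ^ e) j l - (O ^ e) q l|
        = |((O ^ e) j l - P j l) - ((O ^ e) q l - P q l)| := by rw [hP, sub_sub_sub_cancel_right]
      _ ≤ Γ * γ ^ e + Γ * γ ^ e :=
        (abs_sub _ _).trans (add_le_add (hOP e he j l) (hOP e he q l))
      _ = 2 * Γ * γ ^ e := by ring
      _ ≤ max (2 * Γ) 1 * γ ^ e := by gcongr; exact le_max_left _ _

theorem norm_toEndPi_apply_sub_le {M : Matrix n n ℝ} {v : n → E} {j q : n} {B β : ℝ}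
    (hM : ∀ l, |M j l - M q l| ≤ B) (hv : ∀ l, ‖v l‖ ≤ β) :
    ‖Matrix.toEndPi n ℝ E M v j - Matrix.toEndPi n ℝ E M v q‖ ≤ Fintype.card n * (B * β) := by
  rw [Matrix.toEndPi_apply, Matrix.toEndPi_apply, ← sum_sub_distrib]
  calc ‖∑ l, (M j l • v l - M q l • v l)‖
      ≤ ∑ l, ‖(M j l - M q l) • v l‖ := by simp only [sub_smul]; exact norm_sum_le _ _
    _ ≤ ∑ _l : n, B * β := by
      gcongr with l
      rw [norm_smul, Real.norm_eq_abs]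
      exact mul_le_mul (hM l) (hv l) (norm_nonneg _) ((abs_nonneg _).trans (hM l))
    _ = Fintype.card n * (B * β) := by simp

end RowDifference

def geomConv (γ : ℝ) (β : ℕ → ℝ) (k : ℕ) : ℝ :=
  ∑ s ∈ range k, β s * γ ^ (k - 1 - s)

section GeomConv

theorem summable_mul_of_summable_sq {ι : Type*} {f g : ι → ℝ} (hf : Summable fun i => f i ^ 2)
    (hg : Summable fun i => g i ^ 2) : Summable fun i => f i * g i :=
  (hf.add hg).of_norm_bounded fun i => by
    rw [Real.norm_eq_abs, abs_mul]
    nlinarith [two_mul_le_add_sq |f i| |g i|, sq_abs (f i), sq_abs (g i)]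

theorem tendsto_zero_of_summable_sq {f : ℕ → ℝ} (hf : Summable fun k => f k ^ 2) :
    Tendsto f atTop (𝓝 0) := by
  rw [tendsto_zero_iff_abs_tendsto_zero]
  simpa [Real.sqrt_sq_eq_abs, Function.comp_def] using hf.tendsto_atTop_zero.sqrt

variable {γ : ℝ} {β : ℕ → ℝ}

theorem summable_geomConv (hγ0 : 0 ≤ γ) (hγ1 : γ < 1) (hβ0 : ∀ s, 0 ≤ β s) (hβ : Summable β) :
    Summable (geomConv γ β) := by
  have hprod := hβ.mul_of_nonneg (summable_geometric_of_lt_one hγ0 hγ1) (fun s => hβ0 s)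
    (fun e => pow_nonneg hγ0 e)
  refine (summable_nat_add_iff 1).1 ?_
  simpa [geomConv] using summable_sum_mul_range_of_summable_mul hprod

theorem sq_geomConv_le (hγ0 : 0 ≤ γ) (hγ1 : γ < 1) (β : ℕ → ℝ) (k : ℕ) :
    geomConv γ β k ^ 2 ≤ geomConv γ (fun s => β s ^ 2) k / (1 - γ) := by
  have hgeom : ∑ s ∈ range k, γ ^ (k - 1 - s) ≤ 1 / (1 - γ) := by
    rw [sum_range_reflect (γ ^ ·) k, range_eq_Ico]
    simpa using geom_sum_Ico_le_of_lt_one (m := 0) (n := k) hγ0 hγ1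
  calc geomConv γ β k ^ 2
      ≤ (∑ s ∈ range k, γ ^ (k - 1 - s)) * geomConv γ (fun s => β s ^ 2) k :=
        sum_sq_le_sum_mul_sum_of_sq_le_mul _ (fun _ _ => pow_nonneg hγ0 _)
          (fun _ _ => mul_nonneg (sq_nonneg _) (pow_nonneg hγ0 _)) (fun _ _ => le_of_eq (by ring))
    _ ≤ 1 / (1 - γ) * geomConv γ (fun s => β s ^ 2) k := by
      gcongr
      exact sum_nonneg fun _ _ => mul_nonneg (sq_nonneg _) (pow_nonneg hγ0 _)
    _ = _ := by ring

theorem summable_sq_geomConv (hγ0 : 0 ≤ γ) (hγ1 : γ < 1) (hβ : Summable fun s => β s ^ 2) :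
    Summable fun k => geomConv γ β k ^ 2 :=
  ((summable_geomConv hγ0 hγ1 (fun s => sq_nonneg (β s)) hβ).div_const (1 - γ)).of_nonneg_of_le
    (fun _ => sq_nonneg _) (sq_geomConv_le hγ0 hγ1 β)

theorem summable_mul_and_tendsto_zero_of_le_geomConv {a d : ℕ → ℝ} {A B : ℝ}
    (hγ0 : 0 ≤ γ) (hγ1 : γ < 1) (ha : Summable fun k => a k ^ 2)
    (hβ : Summable fun s => β s ^ 2) (hd0 : ∀ k, 0 ≤ d k)
    (hd : ∀ k, d k ≤ A * (B * γ ^ k + geomConv γ β k)) :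
    Summable (fun k => a k * d k) ∧ Tendsto d atTop (𝓝 0) := by
  have hconv := summable_sq_geomConv hγ0 hγ1 hβ
  have hgeom : Summable fun k => (γ ^ k) ^ 2 := by
    refine (summable_geometric_of_lt_one (pow_nonneg hγ0 2) ?_).congr fun k => by ring
    nlinarith
  have habs : Summable fun k => |a k| ^ 2 := by simpa using ha
  constructor
  · refine Summable.of_norm_bounded ((((summable_mul_of_summable_sq habs hgeom).mul_left B).add
      (summable_mul_of_summable_sq habs hconv)).mul_left A) fun k => ?_
    rw [Real.norm_eq_abs, abs_mul, abs_of_nonneg (hd0 k)]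
    calc |a k| * d k ≤ |a k| * (A * (B * γ ^ k + geomConv γ β k)) :=
          mul_le_mul_of_nonneg_left (hd k) (abs_nonneg _)
      _ = _ := by ring
  · refine squeeze_zero hd0 hd ?_
    simpa using (((tendsto_pow_atTop_nhds_zero_of_lt_one hγ0 hγ1).const_mul B).add
      (tendsto_zero_of_summable_sq hconv)).const_mul A

end GeomConv

theorem norm_sub_le_geomConv_of_succ_eq {n E : Type*} [Fintype n] [DecidableEq n]
    [SeminormedAddCommGroup E] [NormedSpace ℝ E] {O : Matrix n n ℝ} {z b : ℕ → n → E}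
    (hz : ∀ k, z (k + 1) = Matrix.toEndPi n ℝ E O (z k) + b k) {j q : n} {C γ : ℝ}
    (hO : ∀ e l, |(O ^ e) j l - (O ^ e) q l| ≤ C * γ ^ e) {β : ℕ → ℝ}
    (hb : ∀ s l, ‖b s l‖ ≤ β s) (k : ℕ) :
    ‖z k j - z k q‖ ≤ Fintype.card n * C * (‖z 0‖ * γ ^ k + geomConv γ β k) := by
  let rowDiff : (n → E) →+ E :=
    Pi.evalAddMonoidHom (fun _ : n => E) j - Pi.evalAddMonoidHom (fun _ : n => E) q
  have hrow : ∀ e (v : n → E) (β' : ℝ), (∀ l, ‖v l‖ ≤ β') →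
      ‖rowDiff ((Matrix.toEndPi n ℝ E O) ^ e • v)‖ ≤ Fintype.card n * C * (β' * γ ^ e) := by
    intro e v β' hv
    rw [← map_pow, Module.End.smul_def]
    calc _ ≤ Fintype.card n * (C * γ ^ e * β') := norm_toEndPi_apply_sub_le (hO e) hv
      _ = _ := by ring
  have hclosed :=
    congrArg rowDiff (eq_pow_smul_add_sum_of_succ_eq (a := Matrix.toEndPi n ℝ E O) hz k)
  rw [map_add, map_sum] at hclosed
  calc ‖z k j - z k q‖ = ‖rowDiff (z k)‖ := rfl
    _ ≤ ‖rowDiff ((Matrix.toEndPi n ℝ E O) ^ k • z 0)‖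
        + ∑ s ∈ range k, ‖rowDiff ((Matrix.toEndPi n ℝ E O) ^ (k - 1 - s) • b s)‖ := by
      rw [hclosed]; exact (norm_add_le _ _).trans (by gcongr; exact norm_sum_le _ _)
    _ ≤ Fintype.card n * C * (‖z 0‖ * γ ^ k)
        + ∑ s ∈ range k, Fintype.card n * C * (β s * γ ^ (k - 1 - s)) := by
      gcongr with s
      · exact hrow k _ _ (norm_le_pi_norm _)
      · exact hrow _ _ _ (hb s)
    _ = _ := by rw [← mul_sum, geomConv]; ring

theorem flue_lemma12_consensus_general
    (N : ℕ)
    (O P : Matrix (Fin N) (Fin N) ℝ)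
    (Γ γ : ℝ) (hγ0 : 0 < γ) (hγ1 : γ < 1)
    (hOP : ∀ k : ℕ, 1 ≤ k → ∀ j l, |(O ^ k) j l - P j l| ≤ Γ * γ ^ k)
    (E : Type*) [NormedAddCommGroup E] [NormedSpace ℝ E]
    (G : ℝ)
    (g : Fin N → E → E) (hg : ∀ i x, ‖g i x‖ ≤ G)
    (α : ℕ → ℝ)
    (z : ℕ → Fin N → E)
    (hz : ∀ (k : ℕ) (i : Fin N),
      z (k + 1) i = (∑ j, O i j • z k j) - α k • g i (z k i))
    (hα2 : Summable fun k => (α k) ^ 2)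
    (m : ℕ)
    (hP : ∀ j q : Fin N, (j : ℕ) < m → (q : ℕ) < m → ∀ l, P j l = P q l) :
    ∀ j q : Fin N, (j : ℕ) < m → (q : ℕ) < m →
      Summable (fun k => α k * ‖z k j - z k q‖) ∧
      Filter.Tendsto (fun k => ‖z k j - z k q‖) Filter.atTop (nhds 0) := by
  intro j q hj hq
  have hz_affine : ∀ k, z (k + 1) =
      Matrix.toEndPi (Fin N) ℝ E O (z k) + fun i => -(α k • g i (z k i)) := by
    intro k
    ext i
    simp [hz, sub_eq_add_neg]
  have hdrift : ∀ s l, ‖-(α s • g l (z s l))‖ ≤ |α s| * G := fun s l => by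
    rw [norm_neg, norm_smul, Real.norm_eq_abs]
    exact mul_le_mul_of_nonneg_left (hg l _) (abs_nonneg _)
  have hbound := norm_sub_le_geomConv_of_succ_eq hz_affine
    (abs_pow_apply_sub_pow_apply_le hγ0.le hOP (hP j q hj hq)) hdrift
  exact summable_mul_and_tendsto_zero_of_le_geomConv hγ0.le hγ1 hα2
    (by simpa [mul_pow] using hα2.mul_right (G ^ 2)) (fun k => norm_nonneg _)
    hbound

/-- **Lemma 12 (parts (a) and (b)) of the FLUE paper.**
In the iteration setting (powers of the updating matrix `O` converge
geometrically to `P`, bounded "gradient" maps `g_i`, nonnegative step sizes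
`α_k`, and the recursion `z_i(k+1) = Σ_j O_{ij}·z_j(k) − α_k·g_i(z_i(k))`),
if in addition `Σ α_k² < ∞` and the first `m` rows of `P` coincide, then for
all indices `j, q` among the first `m`:
(a) `Σ_k α_k·‖z_j(k) − z_q(k)‖ < ∞`, and
(b) `‖z_j(k) − z_q(k)‖ → 0`; the first `m` components reach consensus. -/
theorem flue_lemma12_consensus
    (N : ℕ) (hN : 0 < N)
    (O P : Matrix (Fin N) (Fin N) ℝ)
    (Γ γ : ℝ) (hΓ : 0 < Γ) (hγ0 : 0 < γ) (hγ1 : γ < 1)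
    (hOP : ∀ k : ℕ, 1 ≤ k → ∀ j l, |(O ^ k) j l - P j l| ≤ Γ * γ ^ k)
    (E : Type*) [NormedAddCommGroup E] [NormedSpace ℝ E]
    (G : ℝ) (hG : 0 ≤ G)
    (g : Fin N → E → E) (hg : ∀ i x, ‖g i x‖ ≤ G)
    (α : ℕ → ℝ) (hα : ∀ k, 0 ≤ α k)
    (z : ℕ → Fin N → E)
    (hz : ∀ (k : ℕ) (i : Fin N),
      z (k + 1) i = (∑ j, O i j • z k j) - α k • g i (z k i))
    (hα2 : Summable fun k => (α k) ^ 2)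
    (m : ℕ) (hm : m ≤ N)
    (hP : ∀ j q : Fin N, (j : ℕ) < m → (q : ℕ) < m → ∀ l, P j l = P q l) :
    ∀ j q : Fin N, (j : ℕ) < m → (q : ℕ) < m →
      Summable (fun k => α k * ‖z k j - z k q‖) ∧
      Filter.Tendsto (fun k => ‖z k j - z k q‖) Filter.atTop (nhds 0) :=
  flue_lemma12_consensus_general N O P Γ γ hγ0 hγ1 hOP E G g hg α z hz hα2 m hP
end

section
/- Adopt the ITERATION SETTING. Assume additionally that P·O = P (matrix product). Then for every index j and every integer k ≥ 1: ‖Σ_{l=1}^N P_{j,l}·z_l(k) − z_j(k)‖ ≤ Γ·γ^k·Σ_{l=1}^N ‖z_l(0)‖ + N·G·Γ·Σ_{r=1}^{k−1} γ^{k−r}·α_{r−1} + G·(1 + Σ_{l=1}^N |P_{j,l}|)·α_{k−1}. -/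
/-!
Unrolling the recursion gives the discrete Duhamel formula
`z(k) = O^k z(0) - Σ_{s<k} α_s O^(k-1-s) u(s)` with `u(s)_i = g_i(z_i(s))`.
Since `P O = P`, applying `P - 1` turns each `O^n` into `P - O^n`, whose entries are at most
`Γ γ^n` when `n ≥ 1`. Only the last forcing term, `n = 0`, involves `P - 1` itself; it produces
the `α_{k-1}` term.
-/

open Finset

namespace Matrix

variable {l m n R E : Type*} [Fintype n] [CommRing R] [AddCommGroup E] [Module R E]

/-- `A ⊗ id_E`: the matrix acting on `E`-valued vectors (`Matrix.mulVec` only covers `E = R`). -/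
def vecAction (A : Matrix m n R) : (n → E) →ₗ[R] (m → E) where
  toFun v i := ∑ j, A i j • v j
  map_add' v w := by ext i; simp [smul_add, sum_add_distrib]
  map_smul' c v := by ext i; simp [smul_sum, smul_comm c]

theorem vecAction_apply (A : Matrix m n R) (v : n → E) (i : m) :
    A.vecAction v i = ∑ j, A i j • v j := rfl

theorem vecAction_mul [Fintype m] (A : Matrix l m R) (B : Matrix m n R) :
    (A * B).vecAction (E := E) = A.vecAction ∘ₗ B.vecAction := by
  refine LinearMap.ext fun v => funext fun i => ?_
  simp only [LinearMap.comp_apply, vecAction_apply, mul_apply, sum_smul, smul_sum, mul_smul]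
  exact sum_comm

theorem vecAction_one [DecidableEq n] : (1 : Matrix n n R).vecAction (E := E) = LinearMap.id := by
  refine LinearMap.ext fun v => funext fun i => ?_
  simp [vecAction_apply, one_apply, ite_smul]

theorem vecAction_sub (A B : Matrix m n R) :
    (A - B).vecAction (E := E) = A.vecAction - B.vecAction := by
  refine LinearMap.ext fun v => funext fun i => ?_
  simp [vecAction_apply, sub_smul]

theorem vecAction_pow [DecidableEq n] (A : Matrix n n R) (k : ℕ) :
    (A ^ k).vecAction (E := E) = A.vecAction ^ k := by
  induction k with
  | zero => exact vecAction_one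
  | succ k ih => rw [pow_succ, vecAction_mul, ih, pow_succ, Module.End.mul_eq_comp]

theorem norm_vecAction_apply_le {𝕜 E : Type*} [NormedField 𝕜] [SeminormedAddCommGroup E]
    [NormedSpace 𝕜 E] (A : Matrix m n 𝕜) (v : n → E) (i : m) :
    ‖A.vecAction v i‖ ≤ ∑ j, ‖A i j‖ * ‖v j‖ := by
  rw [vecAction_apply]
  exact (norm_sum_le _ _).trans_eq (sum_congr rfl fun j _ => norm_smul _ _)

theorem norm_vecAction_apply_le_mul_sum_norm {𝕜 E : Type*} [NormedField 𝕜]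
    [SeminormedAddCommGroup E] [NormedSpace 𝕜 E] {A : Matrix m n 𝕜} {i : m} {c : ℝ}
    (hA : ∀ j, ‖A i j‖ ≤ c) (v : n → E) :
    ‖A.vecAction v i‖ ≤ c * ∑ j, ‖v j‖ := by
  rw [mul_sum]
  exact (norm_vecAction_apply_le A v i).trans
    (sum_le_sum fun j _ => mul_le_mul_of_nonneg_right (hA j) (norm_nonneg _))

theorem norm_vecAction_apply_le_sum_norm_mul {𝕜 E : Type*} [NormedField 𝕜]
    [SeminormedAddCommGroup E] [NormedSpace 𝕜 E] (A : Matrix m n 𝕜) (i : m) {v : n → E} {b : ℝ}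
    (hv : ∀ j, ‖v j‖ ≤ b) :
    ‖A.vecAction v i‖ ≤ (∑ j, ‖A i j‖) * b := by
  rw [sum_mul]
  exact (norm_vecAction_apply_le A v i).trans
    (sum_le_sum fun j _ => mul_le_mul_of_nonneg_left (hv j) (norm_nonneg _))

theorem sum_norm_sub_one_apply_le {𝕜 : Type*} [SeminormedRing 𝕜] [NormOneClass 𝕜]
    [DecidableEq n] (A : Matrix n n 𝕜) (i : n) :
    ∑ j, ‖(A - 1) i j‖ ≤ ∑ j, ‖A i j‖ + 1 := by
  calc ∑ j, ‖(A - 1) i j‖ ≤ ∑ j, (‖A i j‖ + ‖(1 : Matrix n n 𝕜) i j‖) :=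
        sum_le_sum fun j _ => norm_sub_le _ _
    _ = ∑ j, ‖A i j‖ + 1 := by simp [sum_add_distrib, one_apply, apply_ite norm]

end Matrix

theorem Module.End.discrete_duhamel {R V : Type*} [Semiring R] [AddCommMonoid V] [Module R V]
    (T : Module.End R V) (x w : ℕ → V) (hx : ∀ k, x (k + 1) = T (x k) + w k) (k : ℕ) :
    x k = (T ^ k) (x 0) + ∑ s ∈ range k, (T ^ (k - 1 - s)) (w s) := by
  induction k with
  | zero => simp
  | succ k ih =>
    have hpow : ∀ s ∈ range k, T ((T ^ (k - 1 - s)) (w s)) = (T ^ (k - s)) (w s) := by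
      intro s hs
      rw [← Module.End.mul_apply, ← pow_succ', show k - 1 - s + 1 = k - s by grind]
    rw [hx, ih, map_add, map_sum, sum_congr rfl hpow, sum_range_succ, ← Module.End.mul_apply,
      ← pow_succ']
    simp [add_assoc]

theorem tracking_error_eq {ι R E : Type*} [Fintype ι] [DecidableEq ι] [CommRing R]
    [AddCommGroup E] [Module R E] {O P : Matrix ι ι R} (hPO : P * O = P) (α : ℕ → R)
    {z u : ℕ → ι → E} (hz : ∀ k, z (k + 1) = O.vecAction (z k) - α k • u k) (k : ℕ) :
    (P - 1).vecAction (z k) = (P - O ^ k).vecAction (z 0)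
      - ∑ s ∈ range k, α s • (P - O ^ (k - 1 - s)).vecAction (u s) := by
  have hPOn : ∀ n, (P - 1) * O ^ n = P - O ^ n := fun n => by
    suffices P * O ^ n = P by rw [sub_mul, one_mul, this]
    induction n with
    | zero => simp
    | succ n ih => rw [pow_succ, ← mul_assoc, ih, hPO]
  have hduhamel :=
    Module.End.discrete_duhamel (O.vecAction (E := E)) z (fun s => -(α s • u s))
      (fun k => by rw [hz, sub_eq_add_neg]) k
  simp only [map_neg, map_smul, sum_neg_distrib, ← sub_eq_add_neg, ← Matrix.vecAction_pow]
    at hduhamel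
  rw [hduhamel, map_sub, map_sum]
  simp only [map_smul, ← LinearMap.comp_apply, ← Matrix.vecAction_mul, hPOn]

theorem norm_forcing_sum_apply_le {ι E : Type*} [Fintype ι] [DecidableEq ι]
    [SeminormedAddCommGroup E] [NormedSpace ℝ E] {O P : Matrix ι ι ℝ} {Γ γ G : ℝ} {j : ι}
    (hG : 0 ≤ G) (hgap : ∀ n, 1 ≤ n → ∀ l, ‖(P - O ^ n) j l‖ ≤ Γ * γ ^ n) {α : ℕ → ℝ}
    (hα : ∀ k, 0 ≤ α k) {u : ℕ → ι → E} (hu : ∀ s l, ‖u s l‖ ≤ G) (K : ℕ) :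
    ‖(∑ s ∈ range (K + 1), α s • (P - O ^ (K - s)).vecAction (u s)) j‖ ≤
      Fintype.card ι * G * Γ * ∑ s ∈ range K, γ ^ (K - s) * α s
        + G * (1 + ∑ l, |P j l|) * α K := by
  have hsmul : ∀ s (v : ι → E), ‖(α s • v) j‖ = α s * ‖v j‖ := fun s v => by
    rw [Pi.smul_apply, norm_smul, Real.norm_of_nonneg (hα s)]
  have hforcing :
      ∀ s n, ‖(P - O ^ n).vecAction (u s) j‖ ≤ (∑ l, ‖(P - O ^ n) j l‖) * G :=
    fun s n => Matrix.norm_vecAction_apply_le_sum_norm_mul _ _ (hu s)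
  have hgap_sum : ∀ n, 1 ≤ n → ∑ l, ‖(P - O ^ n) j l‖ ≤ Fintype.card ι * (Γ * γ ^ n) :=
    fun n hn => by simpa using sum_le_card_nsmul univ _ _ fun l _ => hgap n hn l
  have hlast : ∑ l, ‖(P - 1) j l‖ ≤ 1 + ∑ l, |P j l| := by
    simpa [add_comm] using Matrix.sum_norm_sub_one_apply_le P j
  have hgeometric : ∑ s ∈ range K, α s * (Fintype.card ι * (Γ * γ ^ (K - s)) * G)
      = Fintype.card ι * G * Γ * ∑ s ∈ range K, γ ^ (K - s) * α s := by
    rw [mul_sum]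
    exact sum_congr rfl fun s _ => by ring
  rw [Finset.sum_apply, sum_range_succ, Nat.sub_self, pow_zero]
  calc _ ≤ ∑ s ∈ range K, ‖(α s • (P - O ^ (K - s)).vecAction (u s)) j‖
        + ‖(α K • (P - 1).vecAction (u K)) j‖ :=
        (norm_add_le _ _).trans (add_le_add (norm_sum_le _ _) le_rfl)
    _ ≤ ∑ s ∈ range K, α s * (Fintype.card ι * (Γ * γ ^ (K - s)) * G)
        + α K * ((1 + ∑ l, |P j l|) * G) := by
        simp only [hsmul]
        gcongr with s hs
        · exact hα s
        · exact (hforcing s _).trans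
            (mul_le_mul_of_nonneg_right (hgap_sum _ (by simp at hs; omega)) hG)
        · exact hα K
        · exact (hforcing K 0).trans (mul_le_mul_of_nonneg_right hlast hG)
    _ = _ := by
        rw [hgeometric]
        ring

theorem flue_lemma10_tracking_bound_general
    (N : ℕ)
    (O P : Matrix (Fin N) (Fin N) ℝ)
    (Γ γ : ℝ)
    (hOP : ∀ k : ℕ, 1 ≤ k → ∀ j l, |(O ^ k) j l - P j l| ≤ Γ * γ ^ k)
    (E : Type*) [NormedAddCommGroup E] [NormedSpace ℝ E]
    (G : ℝ) (hG : 0 ≤ G)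
    (g : Fin N → E → E) (hg : ∀ i x, ‖g i x‖ ≤ G)
    (α : ℕ → ℝ) (hα : ∀ k, 0 ≤ α k)
    (z : ℕ → Fin N → E)
    (hz : ∀ (k : ℕ) (i : Fin N),
      z (k + 1) i = (∑ j, O i j • z k j) - α k • g i (z k i))
    (hPO : P * O = P) :
    ∀ (j : Fin N) (k : ℕ), 1 ≤ k →
      ‖(∑ l, P j l • z k l) - z k j‖ ≤
        Γ * γ ^ k * (∑ l, ‖z 0 l‖)
        + (N : ℝ) * G * Γ * (∑ r ∈ Finset.Icc 1 (k - 1), γ ^ (k - r) * α (r - 1))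
        + G * (1 + ∑ l, |P j l|) * α (k - 1) := by
  intro j k hk
  obtain ⟨K, rfl⟩ : ∃ K, k = K + 1 := ⟨k - 1, by omega⟩
  set u : ℕ → Fin N → E := fun s i => g i (z s i)
  have hgap : ∀ n, 1 ≤ n → ∀ l, ‖(P - O ^ n) j l‖ ≤ Γ * γ ^ n := fun n hn l => by
    rw [Matrix.sub_apply, Real.norm_eq_abs, abs_sub_comm]
    exact hOP n hn j l
  have herror :
      (∑ l, P j l • z (K + 1) l) - z (K + 1) j = (P - 1).vecAction (z (K + 1)) j := by
    rw [Matrix.vecAction_sub, Matrix.vecAction_one]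
    rfl
  have hreindex : ∑ r ∈ Icc 1 K, γ ^ (K + 1 - r) * α (r - 1)
      = ∑ s ∈ range K, γ ^ (K - s) * α s := by
    rw [← Ico_add_one_right_eq_Icc, sum_Ico_eq_sum_range]
    simp only [add_comm 1, Nat.add_sub_add_right, Nat.add_sub_cancel]
  rw [herror, tracking_error_eq hPO α (u := u) (fun k => funext (hz k)), Pi.sub_apply,
    Nat.add_sub_cancel, hreindex]
  calc _ ≤ ‖(P - O ^ (K + 1)).vecAction (z 0) j‖
        + ‖(∑ s ∈ range (K + 1), α s • (P - O ^ (K - s)).vecAction (u s)) j‖ :=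
        norm_sub_le _ _
    _ ≤ Γ * γ ^ (K + 1) * ∑ l, ‖z 0 l‖
        + (N * G * Γ * ∑ s ∈ range K, γ ^ (K - s) * α s + G * (1 + ∑ l, |P j l|) * α K) :=
        add_le_add (Matrix.norm_vecAction_apply_le_mul_sum_norm (hgap _ (by omega)) _)
          (by simpa only [Fintype.card_fin] using
            norm_forcing_sum_apply_le hG hgap hα (fun s l => hg l _) K)
    _ = _ := by ring

/-- **Lemma 10 (L11) of the FLUE paper: the tracking bound.**
In the iteration setting, if moreover `P·O = P`, then for every index `j` and
every `k ≥ 1` the distance between the averaged proxy iterate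
`Σ_l P_{jl}·z_l(k)` and the local iterate `z_j(k)` satisfies
`‖Σ_l P_{jl}·z_l(k) − z_j(k)‖ ≤ Γ·γ^k·Σ_l ‖z_l(0)‖
  + N·G·Γ·Σ_{r=1}^{k−1} γ^{k−r}·α_{r−1} + G·(1 + Σ_l |P_{jl}|)·α_{k−1}`. -/
theorem flue_lemma10_tracking_bound
    (N : ℕ) (hN : 0 < N)
    (O P : Matrix (Fin N) (Fin N) ℝ)
    (Γ γ : ℝ) (hΓ : 0 < Γ) (hγ0 : 0 < γ) (hγ1 : γ < 1)
    (hOP : ∀ k : ℕ, 1 ≤ k → ∀ j l, |(O ^ k) j l - P j l| ≤ Γ * γ ^ k)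
    (E : Type*) [NormedAddCommGroup E] [NormedSpace ℝ E]
    (G : ℝ) (hG : 0 ≤ G)
    (g : Fin N → E → E) (hg : ∀ i x, ‖g i x‖ ≤ G)
    (α : ℕ → ℝ) (hα : ∀ k, 0 ≤ α k)
    (z : ℕ → Fin N → E)
    (hz : ∀ (k : ℕ) (i : Fin N),
      z (k + 1) i = (∑ j, O i j • z k j) - α k • g i (z k i))
    (hPO : P * O = P) :
    ∀ (j : Fin N) (k : ℕ), 1 ≤ k →
      ‖(∑ l, P j l • z k l) - z k j‖ ≤
        Γ * γ ^ k * (∑ l, ‖z 0 l‖)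
        + (N : ℝ) * G * Γ * (∑ r ∈ Finset.Icc 1 (k - 1), γ ^ (k - r) * α (r - 1))
        + G * (1 + ∑ l, |P j l|) * α (k - 1) :=
  flue_lemma10_tracking_bound_general N O P Γ γ hOP E G hG g hg α hα z hz hPO
end

section
/- Adopt the ITERATION SETTING. Assume additionally that P·O = P (matrix product) and that Σ_{k=0}^∞ α_k² < ∞. Then for every index j: Σ_{k=0}^∞ α_k · ‖Σ_{l=1}^N P_{j,l}·z_l(k) − z_j(k)‖ < ∞. -/
/-!
Unrolling the recursion gives `z(k) = Oᵏ z(0) - ∑_{s<k} α_s O^{k-1-s} g(z(s))`, and since `P Oᵐ = P`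
the tracking error is `(P - Oᵏ) z(0) - ∑_{s<k} α_s (P - O^{k-1-s}) g(z(s))`. The entries of
`P - Oᵐ` are `O(γᵐ)`, so `α_k` times the error is at most a multiple of
`α_k γᵏ + α_k ∑_{s<k} α_s γ^{k-1-s}`. Both are summable: AM-GM bounds the first by
`(α_k² + γ^{2k}) / 2`, and, through `α_k α_s ≤ (α_k² + α_s²) / 2`, the second by `α_k² / (1 - γ)`
plus the Cauchy product of `α²` with a geometric sequence.
-/

open Finset

namespace Matrix

variable {n R E : Type*} [Fintype n] [DecidableEq n] [CommSemiring R] [AddCommMonoid E]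
  [Module R E]

def piEnd : Matrix n n R →+* Module.End R (n → E) where
  toFun A :=
    { toFun := fun v i => ∑ j, A i j • v j
      map_add' := fun v w => by ext i; simp [smul_add, sum_add_distrib]
      map_smul' := fun c v => by ext i; simp [smul_sum, smul_comm c] }
  map_one' := LinearMap.ext fun v => funext fun i => by simp [one_apply]
  map_mul' A B := LinearMap.ext fun v => funext fun i => by
    simp only [LinearMap.coe_mk, AddHom.coe_mk, Module.End.mul_apply, mul_apply, sum_smul,
      smul_sum, mul_smul]
    exact sum_comm
  map_zero' := LinearMap.ext fun v => funext fun i => by simp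
  map_add' A B := LinearMap.ext fun v => funext fun i => by simp [add_smul, sum_add_distrib]

theorem piEnd_apply (A : Matrix n n R) (v : n → E) (i : n) :
    piEnd A v i = ∑ j, A i j • v j := rfl

end Matrix

namespace Module.End

section Semiring

variable {R V : Type*} [Semiring R] [AddCommMonoid V] [Module R V]

theorem eq_pow_apply_add_sum_of_succ {T : Module.End R V} {x w : ℕ → V}
    (hx : ∀ k, x (k + 1) = T (x k) + w k) (k : ℕ) :
    x k = (T ^ k) (x 0) + ∑ s ∈ range k, (T ^ (k - 1 - s)) (w s) := by
  induction k with
  | zero => simp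
  | succ k ih =>
    have hpow : ∀ s ∈ range k, T ((T ^ (k - 1 - s)) (w s)) = (T ^ (k + 1 - 1 - s)) (w s) := by
      intro s hs
      rw [← Module.End.mul_apply, ← pow_succ', show k - 1 - s + 1 = k + 1 - 1 - s by
        have := mem_range.mp hs; omega]
    rw [hx, ih, map_add, map_sum, sum_congr rfl hpow, sum_range_succ, ← Module.End.mul_apply,
      ← pow_succ', Nat.add_sub_cancel, Nat.sub_self, pow_zero, Module.End.one_apply, add_assoc]

end Semiring

section Ring

variable {R V : Type*} [Ring R] [AddCommGroup V] [Module R V]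

theorem apply_sub_eq_of_mul_eq {T Q : Module.End R V} (hQ : Q * T = Q) {x w : ℕ → V}
    (hx : ∀ k, x (k + 1) = T (x k) + w k) (k : ℕ) :
    Q (x k) - x k = (Q - T ^ k) (x 0) + ∑ s ∈ range k, (Q - T ^ (k - 1 - s)) (w s) := by
  have hQpow : ∀ m, Q * T ^ m = Q := by
    intro m
    induction m with
    | zero => simp
    | succ m ih => rw [pow_succ, ← mul_assoc, ih, hQ]
  have hQx : Q (x k) = Q (x 0) + ∑ s ∈ range k, Q (w s) := by
    rw [eq_pow_apply_add_sum_of_succ hx k]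
    simp only [map_add, map_sum, ← Module.End.mul_apply, hQpow]
  rw [hQx, eq_pow_apply_add_sum_of_succ hx k]
  simp only [LinearMap.sub_apply, sum_sub_distrib]
  abel

end Ring

end Module.End

theorem summable_mul_geometric_of_summable_sq {a : ℕ → ℝ} {γ : ℝ} (ha : ∀ k, 0 ≤ a k)
    (ha2 : Summable fun k => a k ^ 2) (hγ0 : 0 ≤ γ) (hγ1 : γ < 1) :
    Summable fun k => a k * γ ^ k := by
  have hgeom : Summable fun k => (γ ^ k) ^ 2 :=
    (summable_geometric_of_lt_one (sq_nonneg γ) (pow_lt_one₀ hγ0 hγ1 two_ne_zero)).congr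
      fun k => pow_right_comm γ 2 k
  refine .of_nonneg_of_le (fun k => mul_nonneg (ha k) (pow_nonneg hγ0 k)) (fun k => ?_)
    ((ha2.add hgeom).div_const 2)
  nlinarith [sq_nonneg (a k - γ ^ k)]

theorem summable_sum_range_mul_geometric {a : ℕ → ℝ} {γ : ℝ} (ha : ∀ k, 0 ≤ a k)
    (hsum : Summable a) (hγ0 : 0 ≤ γ) (hγ1 : γ < 1) :
    Summable fun k => ∑ s ∈ range k, a s * γ ^ (k - 1 - s) := by
  rw [← summable_nat_add_iff 1]
  simpa only [Nat.add_sub_cancel] using summable_sum_mul_range_of_summable_mul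
    (hsum.mul_of_nonneg (summable_geometric_of_lt_one hγ0 hγ1) ha fun k => pow_nonneg hγ0 k)

theorem sum_range_geometric_le {γ : ℝ} (hγ0 : 0 ≤ γ) (hγ1 : γ < 1) (k : ℕ) :
    ∑ s ∈ range k, γ ^ (k - 1 - s) ≤ (1 - γ)⁻¹ := by
  rw [sum_range_reflect (γ ^ ·) k, ← tsum_geometric_of_lt_one hγ0 hγ1]
  exact (summable_geometric_of_lt_one hγ0 hγ1).sum_le_tsum _ fun i _ => pow_nonneg hγ0 i

theorem summable_mul_sum_range_mul_geometric {a : ℕ → ℝ} {γ : ℝ} (ha : ∀ k, 0 ≤ a k)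
    (ha2 : Summable fun k => a k ^ 2) (hγ0 : 0 ≤ γ) (hγ1 : γ < 1) :
    Summable fun k => a k * ∑ s ∈ range k, a s * γ ^ (k - 1 - s) := by
  have hmaj : Summable fun k =>
      a k ^ 2 / 2 * (1 - γ)⁻¹ + (∑ s ∈ range k, a s ^ 2 * γ ^ (k - 1 - s)) / 2 :=
    (ha2.div_const 2 |>.mul_right _).add
      ((summable_sum_range_mul_geometric (fun k => sq_nonneg (a k)) ha2 hγ0 hγ1).div_const 2)
  refine .of_nonneg_of_le (fun k => mul_nonneg (ha k) (sum_nonneg fun s _ =>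
    mul_nonneg (ha s) (pow_nonneg hγ0 _))) (fun k => ?_) hmaj
  have hamgm : a k * ∑ s ∈ range k, a s * γ ^ (k - 1 - s) ≤
      a k ^ 2 / 2 * ∑ s ∈ range k, γ ^ (k - 1 - s) +
        (∑ s ∈ range k, a s ^ 2 * γ ^ (k - 1 - s)) / 2 := by
    rw [mul_sum, mul_sum, sum_div, ← sum_add_distrib]
    refine sum_le_sum fun s _ => ?_
    nlinarith [sq_nonneg (a k - a s), pow_nonneg hγ0 (k - 1 - s)]
  have hgeom := mul_le_mul_of_nonneg_left (sum_range_geometric_le hγ0 hγ1 k)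
    (div_nonneg (sq_nonneg (a k)) zero_le_two)
  linarith

namespace Matrix

variable {n : Type*} [Fintype n] [DecidableEq n]

theorem exists_abs_sub_pow_le {O P : Matrix n n ℝ} {Γ γ : ℝ} (hγ0 : 0 ≤ γ)
    (hOP : ∀ k : ℕ, 1 ≤ k → ∀ j l, |(O ^ k) j l - P j l| ≤ Γ * γ ^ k) :
    ∃ C, 0 ≤ C ∧ ∀ m j l, |P j l - (O ^ m) j l| ≤ C * γ ^ m := by
  set C₀ := ∑ j, ∑ l, |P j l - (1 : Matrix n n ℝ) j l|
  have hC₀ : 0 ≤ C₀ := sum_nonneg fun j _ => sum_nonneg fun l _ => abs_nonneg _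
  refine ⟨max Γ C₀, hC₀.trans (le_max_right _ _), fun m j l => ?_⟩
  cases m with
  | zero =>
    rw [pow_zero, pow_zero, mul_one]
    calc |P j l - (1 : Matrix n n ℝ) j l|
        ≤ ∑ l', |P j l' - (1 : Matrix n n ℝ) j l'| :=
          single_le_sum (fun l' _ => abs_nonneg (P j l' - (1 : Matrix n n ℝ) j l')) (mem_univ l)
      _ ≤ C₀ := single_le_sum (fun j' _ => sum_nonneg fun l' _ =>
          abs_nonneg (P j' l' - (1 : Matrix n n ℝ) j' l')) (mem_univ j)
      _ ≤ max Γ C₀ := le_max_right _ _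
  | succ m =>
    rw [abs_sub_comm]
    exact (hOP (m + 1) m.succ_pos j l).trans
      (mul_le_mul_of_nonneg_right (le_max_left _ _) (pow_nonneg hγ0 _))

variable {E : Type*} [SeminormedAddCommGroup E] [NormedSpace ℝ E]

theorem norm_piEnd_apply_le {A : Matrix n n ℝ} {B : ℝ} {j : n} (hA : ∀ l, |A j l| ≤ B)
    (v : n → E) : ‖piEnd A v j‖ ≤ B * ∑ l, ‖v l‖ := by
  rw [piEnd_apply, mul_sum]
  refine (norm_sum_le _ _).trans (sum_le_sum fun l _ => ?_)
  rw [norm_smul, Real.norm_eq_abs]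
  exact mul_le_mul_of_nonneg_right (hA l) (norm_nonneg _)

theorem norm_piEnd_apply_sub_le {O P : Matrix n n ℝ} (hPO : P * O = P) {C γ : ℝ} {j : n}
    (hC : ∀ m l, |P j l - (O ^ m) j l| ≤ C * γ ^ m) {x w : ℕ → n → E}
    (hx : ∀ k, x (k + 1) = piEnd O (x k) + w k) (k : ℕ) :
    ‖piEnd P (x k) j - x k j‖ ≤
      C * γ ^ k * ∑ l, ‖x 0 l‖ + ∑ s ∈ range k, C * γ ^ (k - 1 - s) * ∑ l, ‖w s l‖ := by
  have hend : piEnd P * piEnd O = (piEnd P : Module.End ℝ (n → E)) := by rw [← map_mul, hPO]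
  have hdiff := congrFun (Module.End.apply_sub_eq_of_mul_eq hend hx k) j
  simp only [← map_pow, ← map_sub, Pi.sub_apply, Pi.add_apply, Finset.sum_apply] at hdiff
  rw [hdiff]
  exact (norm_add_le _ _).trans (add_le_add (norm_piEnd_apply_le (hC k) _)
    ((norm_sum_le _ _).trans (sum_le_sum fun s _ => norm_piEnd_apply_le (hC _) _)))

end Matrix

theorem flue_lemma11_summable_tracking_general
    (N : ℕ)
    (O P : Matrix (Fin N) (Fin N) ℝ)
    (Γ γ : ℝ) (hγ0 : 0 < γ) (hγ1 : γ < 1)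
    (hOP : ∀ k : ℕ, 1 ≤ k → ∀ j l, |(O ^ k) j l - P j l| ≤ Γ * γ ^ k)
    (E : Type*) [NormedAddCommGroup E] [NormedSpace ℝ E]
    (G : ℝ)
    (g : Fin N → E → E) (hg : ∀ i x, ‖g i x‖ ≤ G)
    (α : ℕ → ℝ) (hα : ∀ k, 0 ≤ α k)
    (z : ℕ → Fin N → E)
    (hz : ∀ (k : ℕ) (i : Fin N),
      z (k + 1) i = (∑ j, O i j • z k j) - α k • g i (z k i))
    (hPO : P * O = P)
    (hα2 : Summable fun k => (α k) ^ 2) :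
    ∀ j : Fin N, Summable (fun k => α k * ‖(∑ l, P j l • z k l) - z k j‖) := by
  intro j
  obtain ⟨C, hC0, hC⟩ := Matrix.exists_abs_sub_pow_le hγ0.le hOP
  set w : ℕ → Fin N → E := fun k i => -(α k • g i (z k i))
  have hzw : ∀ k, z (k + 1) = Matrix.piEnd O (z k) + w k := fun k =>
    funext fun i => by rw [hz, sub_eq_add_neg]; rfl
  have hw : ∀ s, ∑ l, ‖w s l‖ ≤ α s * (N * G) := fun s => by
    simp only [w, norm_neg, norm_smul, Real.norm_of_nonneg (hα s), ← mul_sum]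
    refine mul_le_mul_of_nonneg_left ?_ (hα s)
    simpa using sum_le_sum fun l (_ : l ∈ univ) => hg l (z s l)
  refine .of_nonneg_of_le (fun k => mul_nonneg (hα k) (norm_nonneg _)) (fun k => ?_)
    (((summable_mul_geometric_of_summable_sq hα hα2 hγ0.le hγ1).mul_left
        (C * ∑ l, ‖z 0 l‖)).add
      ((summable_mul_sum_range_mul_geometric hα hα2 hγ0.le hγ1).mul_left (C * (N * G))))
  have hnorm := Matrix.norm_piEnd_apply_sub_le hPO (hC · j) hzw k
  have hsum : ∑ s ∈ range k, C * γ ^ (k - 1 - s) * ∑ l, ‖w s l‖ ≤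
      C * (N * G) * ∑ s ∈ range k, α s * γ ^ (k - 1 - s) := by
    rw [mul_sum]
    refine sum_le_sum fun s _ => ?_
    calc C * γ ^ (k - 1 - s) * ∑ l, ‖w s l‖ ≤ C * γ ^ (k - 1 - s) * (α s * (N * G)) :=
          mul_le_mul_of_nonneg_left (hw s) (mul_nonneg hC0 (pow_nonneg hγ0.le _))
      _ = C * (N * G) * (α s * γ ^ (k - 1 - s)) := by ring
  calc α k * ‖(∑ l, P j l • z k l) - z k j‖
      ≤ α k * (C * γ ^ k * ∑ l, ‖z 0 l‖ + C * (N * G) * ∑ s ∈ range k, α s * γ ^ (k - 1 - s)) :=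
        mul_le_mul_of_nonneg_left (hnorm.trans (by linarith)) (hα k)
    _ = _ := by ring

/-- **Lemma 11 (L12) of the FLUE paper.**
In the iteration setting, if moreover `P·O = P` and `Σ α_k² < ∞`, then for
every index `j` the step-size-weighted distance between the averaged proxy
iterates and the local iterates is summable:
`Σ_k α_k·‖Σ_l P_{jl}·z_l(k) − z_j(k)‖ < ∞`. -/
theorem flue_lemma11_summable_tracking
    (N : ℕ) (hN : 0 < N)
    (O P : Matrix (Fin N) (Fin N) ℝ)
    (Γ γ : ℝ) (hΓ : 0 < Γ) (hγ0 : 0 < γ) (hγ1 : γ < 1)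
    (hOP : ∀ k : ℕ, 1 ≤ k → ∀ j l, |(O ^ k) j l - P j l| ≤ Γ * γ ^ k)
    (E : Type*) [NormedAddCommGroup E] [NormedSpace ℝ E]
    (G : ℝ) (hG : 0 ≤ G)
    (g : Fin N → E → E) (hg : ∀ i x, ‖g i x‖ ≤ G)
    (α : ℕ → ℝ) (hα : ∀ k, 0 ≤ α k)
    (z : ℕ → Fin N → E)
    (hz : ∀ (k : ℕ) (i : Fin N),
      z (k + 1) i = (∑ j, O i j • z k j) - α k • g i (z k i))
    (hPO : P * O = P)
    (hα2 : Summable fun k => (α k) ^ 2) :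
    ∀ j : Fin N, Summable (fun k => α k * ‖(∑ l, P j l • z k l) - z k j‖) :=
  flue_lemma11_summable_tracking_general N O P Γ γ hγ0 hγ1 hOP E G g hg α hα z hz hPO hα2
end

section
/- Let E be a real inner product space, let f : E → ℝ be convex and differentiable with gradient ∇f satisfying ‖∇f(u)‖ ≤ L for all u ∈ E, let ω > 0, let (α_k)_{k≥0} be nonnegative reals, let k' ∈ ℕ, and let y, w : ℕ → E be sequences satisfying y(k+1) = y(k) − ω·α_k·∇f(w(k)) for every k ≥ k'. Then for every x ∈ E and every integer K ≥ k': 2ω·Σ_{k=k'}^{K} α_k·(f(w(k)) − f(x)) ≤ ‖y(k') − x‖² − ‖y(K+1) − x‖² + 2ωL·Σ_{k=k'}^{K} α_k·‖y(k) − w(k)‖ + ω²L²·Σ_{k=k'}^{K} α_k². -/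
open scoped RealInnerProductSpace
open Finset

/-!
Convexity gives `f (w k) - f x ≤ ⟪∇f (w k), w k - x⟫`. Expanding `‖y (k+1) - x‖²` along the step
turns this into a one-step bound in which evaluating the gradient at `w k` instead of `y k` costs
`L ‖y k - w k‖` (Cauchy–Schwarz) and the step length costs `(ω α k L)²`; the one-step bounds
telescope.
-/

theorem ConvexOn.le_sub_of_hasFDerivAt {E : Type*} [NormedAddCommGroup E] [NormedSpace ℝ E]
    {s : Set E} {f : E → ℝ} {f' : E →L[ℝ] ℝ} {u v : E} (hf : ConvexOn ℝ s f)
    (hu : u ∈ s) (hv : v ∈ s) (hf' : HasFDerivAt f f' u) :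
    f' (v - u) ≤ f v - f u := by
  let ℓ : ℝ →ᵃ[ℝ] E := AffineMap.lineMap u v
  have hline : ConvexOn ℝ (ℓ ⁻¹' s) (f ∘ ℓ) := hf.comp_affineMap ℓ
  have hderiv : HasDerivAt (f ∘ ℓ) (f' (v - u)) 0 := by
    have hf'0 : HasFDerivAt f f' (ℓ 0) := by simpa [ℓ] using hf'
    simpa using hf'0.comp_hasDerivAt 0 AffineMap.hasDerivAt_lineMap
  simpa [slope_def_field, ℓ] using
    hline.le_slope_of_hasDerivAt (by simpa [ℓ] using hu) (by simpa [ℓ] using hv) one_pos hderiv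

theorem ConvexOn.sub_le_inner_of_hasFDerivAt {E : Type*} [NormedAddCommGroup E]
    [InnerProductSpace ℝ E] {s : Set E} {f : E → ℝ} {g u v : E} (hf : ConvexOn ℝ s f)
    (hu : u ∈ s) (hv : v ∈ s) (hg : HasFDerivAt f (innerSL ℝ g) u) :
    f u - f v ≤ ⟪g, u - v⟫ := by
  have := hf.le_sub_of_hasFDerivAt hu hv hg
  rw [innerSL_apply_apply, ← neg_sub u, inner_neg_right] at this
  linarith

theorem two_mul_le_of_subgradient_step {E : Type*} [NormedAddCommGroup E] [InnerProductSpace ℝ E]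
    {a c L : ℝ} {g w x y : E} (hc : 0 ≤ c) (hg : ‖g‖ ≤ L) (ha : a ≤ ⟪g, w - x⟫) :
    2 * c * a ≤ ‖y - x‖ ^ 2 - ‖y - c • g - x‖ ^ 2 + 2 * c * L * ‖y - w‖ + c ^ 2 * L ^ 2 := by
  have hexpand : ‖y - c • g - x‖ ^ 2 = ‖y - x‖ ^ 2 - 2 * c * ⟪g, y - x⟫ + c ^ 2 * ‖g‖ ^ 2 := by
    rw [sub_right_comm, norm_sub_sq_real, real_inner_smul_right, norm_smul, real_inner_comm,
      Real.norm_eq_abs, mul_pow, sq_abs]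
    ring
  have hsplit : ⟪g, w - x⟫ = ⟪g, y - x⟫ + ⟪g, w - y⟫ := by
    rw [← inner_add_right, sub_add_sub_cancel']
  have hdrift : ⟪g, w - y⟫ ≤ L * ‖y - w‖ := by
    rw [norm_sub_rev]
    exact (real_inner_le_norm g _).trans (mul_le_mul_of_nonneg_right hg (norm_nonneg _))
  have hsq : c ^ 2 * ‖g‖ ^ 2 ≤ c ^ 2 * L ^ 2 :=
    mul_le_mul_of_nonneg_left (pow_le_pow_left₀ (norm_nonneg g) hg 2) (sq_nonneg c)
  have hlin : 2 * c * a ≤ 2 * c * (⟪g, y - x⟫ + L * ‖y - w‖) :=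
    mul_le_mul_of_nonneg_left (by linarith) (by positivity)
  rw [hexpand]
  linarith

/-- **Lemma 13 (L14) of the FLUE paper.**
If `f` is convex and differentiable on a real inner product space with gradient
`f'` bounded by `L`, and the sequence `y` performs scaled gradient steps
`y(k+1) = y(k) − ω·α_k·∇f(w(k))` for `k ≥ k'`, then for every `x` and every
`K ≥ k'`:
`2ω·Σ_{k=k'}^{K} α_k·(f(w(k)) − f(x)) ≤ ‖y(k') − x‖² − ‖y(K+1) − x‖²
  + 2ωL·Σ_{k=k'}^{K} α_k·‖y(k) − w(k)‖ + ω²L²·Σ_{k=k'}^{K} α_k²`. -/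
theorem flue_lemma13_descent_inequality
    (E : Type*) [NormedAddCommGroup E] [InnerProductSpace ℝ E]
    (f : E → ℝ) (hconv : ConvexOn ℝ Set.univ f)
    (f' : E → E) (hf' : ∀ u, HasFDerivAt f (innerSL ℝ (f' u)) u)
    (L : ℝ) (hL : ∀ u, ‖f' u‖ ≤ L)
    (ω : ℝ) (hω : 0 < ω)
    (α : ℕ → ℝ) (hα : ∀ k, 0 ≤ α k)
    (k' : ℕ) (y w : ℕ → E)
    (hy : ∀ k, k' ≤ k → y (k + 1) = y k - (ω * α k) • f' (w k)) :
    ∀ (x : E) (K : ℕ), k' ≤ K →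
      2 * ω * ∑ k ∈ Finset.Icc k' K, α k * (f (w k) - f x) ≤
        ‖y k' - x‖ ^ 2 - ‖y (K + 1) - x‖ ^ 2
        + 2 * ω * L * ∑ k ∈ Finset.Icc k' K, α k * ‖y k - w k‖
        + ω ^ 2 * L ^ 2 * ∑ k ∈ Finset.Icc k' K, (α k) ^ 2 := by
  intro x K hK
  have hstep : ∀ k ∈ Icc k' K, 2 * ω * (α k * (f (w k) - f x)) ≤
      (‖y k - x‖ ^ 2 - ‖y (k + 1) - x‖ ^ 2) + 2 * ω * L * (α k * ‖y k - w k‖)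
        + ω ^ 2 * L ^ 2 * α k ^ 2 := by
    intro k hk
    have hsub := hconv.sub_le_inner_of_hasFDerivAt (Set.mem_univ _) (Set.mem_univ x) (hf' (w k))
    rw [hy k (mem_Icc.1 hk).1]
    calc 2 * ω * (α k * (f (w k) - f x)) = 2 * (ω * α k) * (f (w k) - f x) := by ring
      _ ≤ _ := two_mul_le_of_subgradient_step (mul_nonneg hω.le (hα k)) (hL (w k)) hsub
      _ = _ := by ring
  have htelescope : ∑ k ∈ Icc k' K, (‖y k - x‖ ^ 2 - ‖y (k + 1) - x‖ ^ 2) =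
      ‖y k' - x‖ ^ 2 - ‖y (K + 1) - x‖ ^ 2 := by
    rw [← neg_sub, ← sum_Icc_sub hK (fun k => ‖y k - x‖ ^ 2), ← sum_neg_distrib]
    simp only [neg_sub]
  calc 2 * ω * ∑ k ∈ Icc k' K, α k * (f (w k) - f x)
      = ∑ k ∈ Icc k' K, 2 * ω * (α k * (f (w k) - f x)) := mul_sum _ _ _
    _ ≤ _ := sum_le_sum hstep
    _ = _ := by rw [sum_add_distrib, sum_add_distrib, htelescope, ← mul_sum, ← mul_sum]
end

section
/- Let E be a real inner product space, let f : E → ℝ be convex and differentiable with gradient ∇f satisfying ‖∇f(u)‖ ≤ L for all u ∈ E, and suppose f attains a global minimum at x* ∈ E (f(x*) ≤ f(x) for all x). Let ω > 0, let (α_k)_{k≥0} be nonnegative reals with Σ_{k=0}^∞ α_k = ∞ and Σ_{k=0}^∞ α_k² < ∞, let k' ∈ ℕ, and let y, w : ℕ → E satisfy y(k+1) = y(k) − ω·α_k·∇f(w(k)) for every k ≥ k' and Σ_{k=0}^∞ α_k·‖y(k) − w(k)‖ < ∞. Then liminf_{k→∞} f(w(k)) = f(x*). -/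
/-! `‖y k - x*‖²` is a Lyapunov function for the perturbed gradient iteration: by the first-order
characterisation of convexity, each step decreases it by `2ωα_k (f (w k) - f x*)` up to an error
`ω²L²α_k² + 2ωLα_k ‖y k - w k‖`, which is summable. Telescoping makes `Σ α_k (f (w k) - f x*)`
finite, and since `Σ α_k = ∞` the gaps `f (w k) - f x*` cannot stay above any `ε > 0`. -/

open Filter Set
open scoped InnerProductSpace

theorem ConvexOn.add_le_of_hasFDerivAt {E : Type*} [NormedAddCommGroup E] [NormedSpace ℝ E]
    {s : Set E} {f : E → ℝ} {f' : E →L[ℝ] ℝ} {x z : E} (hf : ConvexOn ℝ s f)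
    (hx : x ∈ s) (hz : z ∈ s) (hfx : HasFDerivAt f f' x) :
    f x + f' (z - x) ≤ f z := by
  let line : ℝ →ᵃ[ℝ] E := AffineMap.lineMap x z
  have hline : ConvexOn ℝ (line ⁻¹' s) (f ∘ line) := hf.comp_affineMap line
  have hderiv : HasDerivAt (f ∘ line) (f' (z - x)) 0 := by
    have : HasFDerivAt f f' (line 0) := by simpa [line] using hfx
    exact this.comp_hasDerivAt 0 AffineMap.hasDerivAt_lineMap
  have hslope := hline.le_slope_of_hasDerivAt (by simpa [line] using hx)
    (by simpa [line] using hz) zero_lt_one hderiv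
  rw [slope_def_field, Function.comp_apply, Function.comp_apply, AffineMap.lineMap_apply_zero,
    AffineMap.lineMap_apply_one, sub_zero, div_one] at hslope
  linarith

theorem ConvexOn.norm_sub_smul_sub_sq_le {E : Type*} [NormedAddCommGroup E]
    [InnerProductSpace ℝ E] {s : Set E} {f : E → ℝ} {g w x : E} {L t : ℝ}
    (hf : ConvexOn ℝ s f) (hw : w ∈ s) (hx : x ∈ s) (hg : HasFDerivAt f (innerSL ℝ g) w)
    (hgL : ‖g‖ ≤ L) (ht : 0 ≤ t) (y : E) :
    ‖y - t • g - x‖ ^ 2 ≤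
      ‖y - x‖ ^ 2 - 2 * t * (f w - f x) + t ^ 2 * L ^ 2 + 2 * t * L * ‖y - w‖ := by
  have hgap : f w - f x ≤ ⟪g, w - x⟫_ℝ := by
    have := hf.add_le_of_hasFDerivAt hw hx hg
    rw [innerSL_apply_apply, ← neg_sub, inner_neg_right] at this
    linarith
  have htrack : -(L * ‖y - w‖) ≤ ⟪g, y - w⟫_ℝ :=
    calc -(L * ‖y - w‖) ≤ -(‖g‖ * ‖y - w‖) :=
          neg_le_neg (mul_le_mul_of_nonneg_right hgL (norm_nonneg _))
      _ ≤ ⟪g, y - w⟫_ℝ := neg_le_of_abs_le (abs_real_inner_le_norm g (y - w))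
  have hinner : f w - f x - L * ‖y - w‖ ≤ ⟪g, y - x⟫_ℝ := by
    rw [show y - x = (w - x) + (y - w) by abel, inner_add_right]
    linarith
  have hsq : ‖g‖ ^ 2 ≤ L ^ 2 := pow_le_pow_left₀ (norm_nonneg g) hgL 2
  have hexpand : ‖y - t • g - x‖ ^ 2 = ‖y - x‖ ^ 2 - 2 * t * ⟪g, y - x⟫_ℝ + t ^ 2 * ‖g‖ ^ 2 := by
    rw [sub_right_comm, norm_sub_sq_real, real_inner_smul_right, real_inner_comm, norm_smul,
      mul_pow, Real.norm_eq_abs, sq_abs]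
    ring
  rw [hexpand]
  nlinarith [mul_le_mul_of_nonneg_left hinner ht, mul_le_mul_of_nonneg_left hsq (sq_nonneg t)]

theorem summable_of_le_sub_add {u D e : ℕ → ℝ} {N : ℕ} (hu : ∀ k, 0 ≤ u k) (hD : ∀ k, 0 ≤ D k)
    (he : Summable e) (h : ∀ k ≥ N, u k ≤ D k - D (k + 1) + e k) : Summable u := by
  rw [← summable_nat_add_iff N]
  obtain ⟨C, hC⟩ := ((summable_nat_add_iff N).2 he).tendsto_sum_tsum_nat.bddAbove_range
  refine summable_of_sum_range_le (c := D N + C) (fun k => hu _) fun n => ?_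
  have htelescope := Finset.sum_range_sub' (fun k => D (k + N)) n
  simp only [zero_add, add_right_comm _ 1 N] at htelescope
  calc ∑ k ∈ Finset.range n, u (k + N)
      ≤ ∑ k ∈ Finset.range n, (D (k + N) - D (k + N + 1) + e (k + N)) :=
        Finset.sum_le_sum fun k _ => h _ (Nat.le_add_left N k)
    _ = D N - D (n + N) + ∑ k ∈ Finset.range n, e (k + N) := by
        rw [Finset.sum_add_distrib, htelescope]
    _ ≤ D N + C := by linarith [hD (n + N), hC (mem_range_self n)]

theorem frequently_lt_of_summable_mul {α g : ℕ → ℝ} {ε : ℝ} (hα : ∀ k, 0 ≤ α k)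
    (hdiv : ¬Summable α) (hαg : Summable fun k => α k * g k) (hε : 0 < ε) :
    ∃ᶠ k in atTop, g k < ε := by
  contrapose! hdiv
  refine Summable.of_norm_bounded_eventually_nat (hαg.div_const ε) ?_
  filter_upwards [hdiv] with k hk
  rw [Real.norm_of_nonneg (hα k), le_div_iff₀ hε]
  exact mul_le_mul_of_nonneg_left hk (hα k)

theorem liminf_eq_of_le_of_frequently_lt {ι : Type*} {l : Filter ι} {u : ι → ℝ} {a : ℝ}
    (hle : ∀ i, a ≤ u i) (hfreq : ∀ ε > 0, ∃ᶠ i in l, u i < a + ε) : liminf u l = a := by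
  have hbdd : IsBoundedUnder (· ≥ ·) l u := isBoundedUnder_of ⟨a, hle⟩
  refine le_antisymm (le_of_forall_pos_le_add fun ε hε => ?_) ?_
  · exact liminf_le_of_frequently_le ((hfreq ε hε).mono fun i hi => hi.le) hbdd
  · exact le_liminf_of_le (IsCoboundedUnder.of_frequently_le ((hfreq 1 one_pos).mono
      fun i hi => hi.le)) (Eventually.of_forall hle)

/-- **Analytic core of Lemma 14 (L15) / Theorems 2 and 5 of the FLUE paper.**
If `f` is convex and differentiable with gradient `f'` bounded by `L` and
attains its global minimum at `x*`, the step sizes `α_k ≥ 0` satisfy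
`Σ α_k = ∞` and `Σ α_k² < ∞`, the sequence `y` performs the scaled gradient
steps `y(k+1) = y(k) − ω·α_k·∇f(w(k))` for `k ≥ k'`, and the tracking error is
summable (`Σ α_k·‖y(k) − w(k)‖ < ∞`), then
`liminf_{k→∞} f(w(k)) = f(x*)`. -/
theorem flue_lemma14_liminf_optimal
    (E : Type*) [NormedAddCommGroup E] [InnerProductSpace ℝ E]
    (f : E → ℝ) (hconv : ConvexOn ℝ Set.univ f)
    (f' : E → E) (hf' : ∀ u, HasFDerivAt f (innerSL ℝ (f' u)) u)
    (L : ℝ) (hL : ∀ u, ‖f' u‖ ≤ L)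
    (xstar : E) (hmin : ∀ x, f xstar ≤ f x)
    (ω : ℝ) (hω : 0 < ω)
    (α : ℕ → ℝ) (hα : ∀ k, 0 ≤ α k)
    (hdiv : Filter.Tendsto (fun K => ∑ k ∈ Finset.range K, α k)
      Filter.atTop Filter.atTop)
    (hα2 : Summable fun k => (α k) ^ 2)
    (k' : ℕ) (y w : ℕ → E)
    (hy : ∀ k, k' ≤ k → y (k + 1) = y k - (ω * α k) • f' (w k))
    (htrack : Summable fun k => α k * ‖y k - w k‖) :
    Filter.liminf (fun k => f (w k)) Filter.atTop = f xstar := by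
  let gap := fun k => f (w k) - f xstar
  let e := fun k => ω ^ 2 * L ^ 2 * α k ^ 2 + 2 * ω * L * (α k * ‖y k - w k‖)
  have hdescent : ∀ k ≥ k', 2 * ω * (α k * gap k) ≤
      ‖y k - xstar‖ ^ 2 - ‖y (k + 1) - xstar‖ ^ 2 + e k := by
    intro k hk
    have := hconv.norm_sub_smul_sub_sq_le (mem_univ _) (mem_univ xstar) (hf' (w k)) (hL _)
      (mul_nonneg hω.le (hα k)) (y k)
    rw [hy k hk]
    linear_combination this
  have hgap_summable : Summable fun k => α k * gap k := by
    refine (summable_mul_left_iff (by positivity : 2 * ω ≠ 0)).1 ?_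
    refine summable_of_le_sub_add (fun k => ?_) (fun k => sq_nonneg _)
      ((hα2.mul_left _).add (htrack.mul_left _)) hdescent
    exact mul_nonneg (by positivity) (mul_nonneg (hα k) (sub_nonneg.2 (hmin (w k))))
  have hα_not_summable : ¬Summable α := fun h =>
    (summable_iff_not_tendsto_nat_atTop_of_nonneg hα).1 h hdiv
  refine liminf_eq_of_le_of_frequently_lt (fun k => hmin (w k)) fun ε hε => ?_
  refine (frequently_lt_of_summable_mul hα hα_not_summable hgap_summable hε).mono fun k hk => ?_
  simp only [gap] at hk
  linarith
end

section
/- Let k₀ ∈ ℕ, let A ≥ 0 and B ≥ 0 be reals, and let b : ℕ → ℝ be a sequence with b_k ≥ 0 for all k, such that for every integer K ≥ k₀: Σ_{k=k₀}^{K} (k+1)^{−1/2}·b_k ≤ A + B·Σ_{k=k₀}^{K} (k+1)^{−1}. Then there exists a constant C > 0 such that for every integer K ≥ k₀: min_{k₀ ≤ k ≤ K} b_k ≤ C·(1 + log(K+1)) / √(K+1). -/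
/-!
Bounding every `b k` below by the minimum `m` turns the hypothesis into
`m · Σ (k+1)^{-1/2} ≤ A + B · Σ (k+1)⁻¹`. The weights on the left sum to at least
`(K + 1 - k₀)/√(K+1) ≥ √(K+1)/(k₀+1)`, while the harmonic sum on the right is at most
`1 + log (K+1)`, so `m · √(K+1) ≤ (k₀+1)(A+B)(1 + log (K+1))`.
-/

open Finset Real

theorem Finset.inf'_mul_sum_le_sum_mul {ι R : Type*} [CommSemiring R] [LinearOrder R]
    [IsOrderedRing R] {s : Finset ι} (hs : s.Nonempty) (w b : ι → R) (hw : ∀ i ∈ s, 0 ≤ w i) :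
    s.inf' hs b * ∑ i ∈ s, w i ≤ ∑ i ∈ s, w i * b i := by
  rw [Finset.mul_sum]
  refine Finset.sum_le_sum fun i hi => ?_
  rw [mul_comm]
  exact mul_le_mul_of_nonneg_left (Finset.inf'_le b hi) (hw i hi)

theorem sum_Icc_inv_succ_le_one_add_log (k₀ K : ℕ) :
    ∑ k ∈ Icc k₀ K, ((k : ℝ) + 1)⁻¹ ≤ 1 + log ((K : ℝ) + 1) :=
  calc ∑ k ∈ Icc k₀ K, ((k : ℝ) + 1)⁻¹
      ≤ ∑ k ∈ range (K + 1), ((k : ℝ) + 1)⁻¹ :=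
        sum_le_sum_of_subset_of_nonneg
          (fun k hk => mem_range.mpr (Nat.lt_succ_of_le (mem_Icc.mp hk).2))
          (fun _ _ _ => by positivity)
    _ = harmonic (K + 1) := by simp [harmonic]
    _ ≤ 1 + log ((K : ℝ) + 1) := by exact_mod_cast harmonic_le_one_add_log (K + 1)

theorem sqrt_div_le_sum_Icc_rpow_neg_half {k₀ K : ℕ} (hK : k₀ ≤ K) :
    √((K : ℝ) + 1) / ((k₀ : ℝ) + 1) ≤ ∑ k ∈ Icc k₀ K, ((k : ℝ) + 1) ^ (-(1 : ℝ) / 2) := by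
  have hterm : ∀ k ∈ Icc k₀ K, (√((K : ℝ) + 1))⁻¹ ≤ ((k : ℝ) + 1) ^ (-(1 : ℝ) / 2) := by
    intro k hk
    rw [sqrt_eq_rpow, ← rpow_neg (by positivity), neg_div]
    have : (k : ℝ) ≤ K := by exact_mod_cast (mem_Icc.mp hk).2
    exact rpow_le_rpow_of_nonpos (by positivity) (by linarith) (by norm_num)
  have hcard : ((#(Icc k₀ K) : ℕ) : ℝ) = (K : ℝ) + 1 - k₀ := by
    rw [Nat.card_Icc, Nat.cast_sub (by omega)]
    push_cast
    ring
  have hsum := card_nsmul_le_sum _ _ _ hterm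
  rw [nsmul_eq_mul, hcard] at hsum
  refine le_trans ?_ hsum
  have hs : 0 < √((K : ℝ) + 1) := sqrt_pos.mpr (by positivity)
  have hk : (k₀ : ℝ) ≤ K := by exact_mod_cast hK
  rw [div_le_iff₀ (by positivity), ← div_eq_mul_inv, mul_comm, ← mul_div_assoc,
    le_div_iff₀ hs, mul_self_sqrt (by positivity)]
  -- `(k₀+1)(K+1-k₀) - (K+1) = k₀(K-k₀)`
  nlinarith

/-- **Convergence rate of the FLUE iterates (rate-of-convergence section of
the paper).**
If the nonnegative sequence `b` satisfies, for every `K ≥ k₀`,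
`Σ_{k=k₀}^{K} (k+1)^{−1/2}·b_k ≤ A + B·Σ_{k=k₀}^{K} (k+1)^{−1}`,
then there is a constant `C > 0` such that for every `K ≥ k₀`,
`min_{k₀ ≤ k ≤ K} b_k ≤ C·(1 + log(K+1))/√(K+1)`;
i.e. the optimality gap decays like `O(log k / √k)`. -/
theorem flue_convergence_rate
    (k₀ : ℕ) (A B : ℝ) (hA : 0 ≤ A) (hB : 0 ≤ B)
    (b : ℕ → ℝ) (hb : ∀ k, 0 ≤ b k)
    (h : ∀ K : ℕ, k₀ ≤ K →
      ∑ k ∈ Finset.Icc k₀ K, ((k : ℝ) + 1) ^ (-(1 : ℝ) / 2) * b k ≤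
        A + B * ∑ k ∈ Finset.Icc k₀ K, ((k : ℝ) + 1)⁻¹) :
    ∃ C : ℝ, 0 < C ∧ ∀ (K : ℕ) (hK : k₀ ≤ K),
      (Finset.Icc k₀ K).inf' (Finset.nonempty_Icc.mpr hK) b ≤
        C * (1 + Real.log ((K : ℝ) + 1)) / Real.sqrt ((K : ℝ) + 1) := by
  refine ⟨((k₀ : ℝ) + 1) * (A + B) + 1, by positivity, fun K hK => ?_⟩
  set m := (Icc k₀ K).inf' (nonempty_Icc.mpr hK) b
  set L := 1 + log ((K : ℝ) + 1)
  have hm : 0 ≤ m := le_inf' _ _ fun k _ => hb k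
  have hL : 1 ≤ L := le_add_of_nonneg_right (log_nonneg (by linarith [K.cast_nonneg (α := ℝ)]))
  have hweighted : m * ∑ k ∈ Icc k₀ K, ((k : ℝ) + 1) ^ (-(1 : ℝ) / 2) ≤ A + B * L :=
    (inf'_mul_sum_le_sum_mul _ _ b fun _ _ => by positivity).trans <| (h K hK).trans <| by
      gcongr; exact sum_Icc_inv_succ_le_one_add_log k₀ K
  have hsqrt := mul_le_mul_of_nonneg_left (sqrt_div_le_sum_Icc_rpow_neg_half hK) hm
  rw [mul_div_assoc', div_le_iff₀ (by positivity)] at hsqrt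
  rw [le_div_iff₀ (sqrt_pos.mpr (by positivity))]
  calc m * √((K : ℝ) + 1) ≤ (A + B * L) * ((k₀ : ℝ) + 1) := by nlinarith
    _ ≤ (A + B) * L * ((k₀ : ℝ) + 1) := by gcongr; nlinarith
    _ ≤ (((k₀ : ℝ) + 1) * (A + B) + 1) * L := by nlinarith
end
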